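/- arXiv:2602.13883 — 9 statements merged into one kernel-verified Lean document; each statement's English description precedes it below -/
import Mathlib

section
/- Let X be a separable metric space, k ≥ 0, and A, B ⊆ X subsets with topological (covering) dimension at most k such that A is closed in A ∪ B. Then A ∪ B has dimension at most k. -/
open Set Metric

/-- Covering dimension at most `k`: every finite open cover admits an open shrinking
of order at most `k + 1`. -/
def covDimLE (X : Type*) [TopologicalSpace X] (k : ℕ) : Prop :=
  ∀ (ι : Type) (U : ι → Set X), Finite ι → (∀ a, IsOpen (U a)) → (⋃ a, U a) = Set.univ →
    ∃ V : ι → Set X, (∀ a, IsOpen (V a)) ∧ (∀ a, V a ⊆ U a) ∧ (⋃ a, V a) = Set.univ ∧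
      ∀ x : X, {a | x ∈ V a}.Finite ∧ {a | x ∈ V a}.ncard ≤ k + 1

/-- Relative covering dimension of a subset `S` of an ambient space `X`, phrased with
ambient open sets. -/
def RelDim {X : Type*} [TopologicalSpace X] (S : Set X) (k : ℕ) : Prop :=
  ∀ (ι : Type) (U : ι → Set X), Finite ι → (∀ i, IsOpen (U i)) → S ⊆ ⋃ i, U i →
    ∃ V : ι → Set X, (∀ i, IsOpen (V i)) ∧ (∀ i, V i ⊆ U i) ∧ S ⊆ ⋃ i, V i ∧
      ∀ x ∈ S, {i | x ∈ V i}.ncard ≤ k + 1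

lemma ord_le_of_no_big {ι : Type} [Finite ι] {s : Set ι} {k : ℕ}
    (h : ∀ t : Set ι, t ⊆ s → t.ncard = k + 2 → False) : s.ncard ≤ k + 1 := by
  by_contra hc
  push_neg at hc
  obtain ⟨t, hts, htc⟩ := Set.exists_subset_card_eq (show k + 2 ≤ s.ncard from hc)
  exact h t hts htc

lemma covDimLE_to_relDim {X : Type*} [TopologicalSpace X] {S : Set X} {k : ℕ}
    (h : covDimLE S k) : RelDim S k := by
  intro ι U hfin hop hcov
  obtain ⟨V, hVo, hVU, hVcov, hVord⟩ := h ι (fun i => ((↑) : ↥S → X) ⁻¹' U i) hfin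
    (fun i => (hop i).preimage continuous_subtype_val)
    (by
      ext x
      simp only [Set.mem_iUnion, Set.mem_preimage, Set.mem_univ, iff_true]
      exact Set.mem_iUnion.mp (hcov x.2))
  choose T hTo hTV using fun i => isOpen_induced_iff.mp (hVo i)
  refine ⟨fun i => T i ∩ U i, fun i => (hTo i).inter (hop i), fun i => Set.inter_subset_right,
    ?_, ?_⟩
  · intro x hx
    have hmem : (⟨x, hx⟩ : ↥S) ∈ ⋃ i, V i := by rw [hVcov]; trivial
    obtain ⟨i, hi⟩ := Set.mem_iUnion.mp hmem
    have hxT : x ∈ T i := by rw [← hTV i] at hi; exact hi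
    exact Set.mem_iUnion.mpr ⟨i, hxT, hVU i hi⟩
  · intro x hx
    have hsub : {i | x ∈ T i ∩ U i} ⊆ {i | (⟨x, hx⟩ : ↥S) ∈ V i} := by
      intro i hi
      have hmem : (⟨x, hx⟩ : ↥S) ∈ ((↑) : ↥S → X) ⁻¹' T i := hi.1
      rw [hTV i] at hmem
      exact hmem
    exact le_trans (Set.ncard_le_ncard hsub (Set.toFinite _)) (hVord ⟨x, hx⟩).2

lemma relDim_pullback {X : Type*} [TopologicalSpace X] {S T : Set X} {k : ℕ}
    (hST : S ⊆ T) (h : RelDim S k) : RelDim (((↑) : ↥T → X) ⁻¹' S) k := by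
  intro ι Ut hfin hop hcov
  choose U hUo hUpre using fun i => isOpen_induced_iff.mp (hop i)
  have hScov : S ⊆ ⋃ i, U i := by
    intro x hx
    have hmem : (⟨x, hST hx⟩ : ↥T) ∈ ⋃ i, Ut i := hcov hx
    obtain ⟨i, hi⟩ := Set.mem_iUnion.mp hmem
    rw [← hUpre i] at hi
    exact Set.mem_iUnion.mpr ⟨i, hi⟩
  obtain ⟨V, hVo, hVU, hVcov, hVord⟩ := h ι U hfin hUo hScov
  refine ⟨fun i => ((↑) : ↥T → X) ⁻¹' V i,
    fun i => (hVo i).preimage continuous_subtype_val,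
    fun i => by rw [← hUpre i]; exact Set.preimage_mono (hVU i), ?_, ?_⟩
  · intro x hx
    obtain ⟨i, hi⟩ := Set.mem_iUnion.mp (hVcov hx)
    exact Set.mem_iUnion.mpr ⟨i, hi⟩
  · intro x hx
    exact hVord (↑x) hx

lemma relDim_closed_mono {X : Type*} [TopologicalSpace X] {k : ℕ} {B C : Set X}
    (h : RelDim B k) (hCB : C ⊆ B) (hC : IsClosed C) : RelDim C k := by
  intro ι U hfin hop hcov
  haveI := hfin
  haveI : Fintype ι := Fintype.ofFinite ι
  obtain ⟨T, hTo, hTU, hTcov, hTord⟩ := h (Option ι) (fun j => Option.elim j Cᶜ U)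
    inferInstance
    (fun j => by cases j with
      | none => exact hC.isOpen_compl
      | some i => exact hop i)
    (by
      intro x _
      by_cases hx : x ∈ C
      · obtain ⟨i, hi⟩ := Set.mem_iUnion.mp (hcov hx)
        exact Set.mem_iUnion.mpr ⟨some i, hi⟩
      · exact Set.mem_iUnion.mpr ⟨none, hx⟩)
  refine ⟨fun i => T (some i), fun i => hTo _, fun i => hTU (some i), ?_, ?_⟩
  · intro x hx
    obtain ⟨j, hj⟩ := Set.mem_iUnion.mp (hTcov (hCB hx))
    cases j with
    | none => exact absurd (hTU none hj) (by simpa using hx)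
    | some i => exact Set.mem_iUnion.mpr ⟨i, hj⟩
  · intro x hx
    calc {i | x ∈ T (some i)}.ncard
        = (some '' {i | x ∈ T (some i)}).ncard :=
          (Set.ncard_image_of_injective _ (Option.some_injective ι)).symm
      _ ≤ {j | x ∈ T j}.ncard := by
          refine Set.ncard_le_ncard ?_ (Set.toFinite _)
          rintro j ⟨i, hi, rfl⟩
          exact hi
      _ ≤ k + 1 := hTord x (hCB hx)

section MetricPart

variable {X : Type*} [MetricSpace X]

/-- Metric swelling: closed sets of order ≤ k+1 can be enlarged to open sets of order ≤ k+1
inside prescribed open neighborhoods. -/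
lemma metric_swelling {ι : Type} [Finite ι] {k : ℕ} (D W : ι → Set X)
    (hDc : ∀ i, IsClosed (D i)) (hDW : ∀ i, D i ⊆ W i) (hWo : ∀ i, IsOpen (W i))
    (hord : ∀ x, {i | x ∈ D i}.ncard ≤ k + 1) :
    ∃ G : ι → Set X, (∀ i, IsOpen (G i)) ∧ (∀ i, D i ⊆ G i) ∧ (∀ i, G i ⊆ W i) ∧
      ∀ x, {i | x ∈ G i}.ncard ≤ k + 1 := by
  classical
  set g : ι → X → ℝ := fun i =>
    if (D i).Nonempty then fun x => infDist x (D i) else fun _ => 1 with hg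
  have hgcont : ∀ i, Continuous (g i) := by
    intro i
    by_cases h : (D i).Nonempty <;> simp only [hg, h, if_true, if_false]
    · exact continuous_infDist_pt _
    · exact continuous_const
  have hg0 : ∀ i x, x ∈ D i → g i x = 0 := by
    intro i x hx
    have hne : (D i).Nonempty := ⟨x, hx⟩
    simp only [hg, hne, if_true]
    exact infDist_zero_of_mem hx
  have hgpos : ∀ i x, x ∉ D i → 0 < g i x := by
    intro i x hx
    by_cases hne : (D i).Nonempty
    · simp only [hg, hne, if_true]
      exact ((hDc i).notMem_iff_infDist_pos hne).mp hx
    · simp only [hg, hne, if_false]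
      norm_num
  refine ⟨fun i => W i ∩
      ⋂ (S : {S : Set ι // S.ncard = k + 2 ∧ i ∈ S}), ⋃ j ∈ S.1, {x | g i x < g j x},
    ?_, ?_, fun i => Set.inter_subset_left, ?_⟩
  · intro i
    refine (hWo i).inter (isOpen_iInter_of_finite fun S => ?_)
    exact isOpen_biUnion fun j _ => isOpen_lt (hgcont i) (hgcont j)
  · intro i x hx
    refine ⟨hDW i hx, Set.mem_iInter.mpr fun S => ?_⟩
    obtain ⟨hcard, hiS⟩ := S.2
    have hexj : ∃ j ∈ S.1, x ∉ D j := by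
      by_contra hcon
      push_neg at hcon
      have hsub : S.1 ⊆ {j | x ∈ D j} := fun j hj => hcon j hj
      have h1 := Set.ncard_le_ncard hsub (Set.toFinite _)
      have h2 := hord x
      omega
    obtain ⟨j, hjS, hjD⟩ := hexj
    refine Set.mem_biUnion hjS ?_
    show g i x < g j x
    rw [hg0 i x hx]
    exact hgpos j x hjD
  · intro x
    refine ord_le_of_no_big fun t hts htc => ?_
    have htne : t.Nonempty := Set.nonempty_of_ncard_ne_zero (by omega)
    obtain ⟨i0, hi0t, hmax⟩ := Set.exists_max_image t (fun i => g i x) (Set.toFinite t) htne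
    have hx0 := hts hi0t
    have hmem := Set.mem_iInter.mp hx0.2 ⟨t, htc, hi0t⟩
    simp only [Set.mem_iUnion, Set.mem_setOf_eq] at hmem
    obtain ⟨j, hjt, hlt⟩ := hmem
    exact absurd (hmax j hjt) (not_le.mpr hlt)

/-- Metric closed shrinking within a closed set. -/
lemma metric_closed_shrink {ι : Type} [Finite ι] {F : Set X} (hF : IsClosed F)
    (W : ι → Set X) (hWo : ∀ i, IsOpen (W i)) (hcov : F ⊆ ⋃ i, W i) :
    ∃ D : ι → Set X, (∀ i, IsClosed (D i)) ∧ (∀ i, D i ⊆ W i ∩ F) ∧ F ⊆ ⋃ i, D i := by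
  classical
  set f : ι → X → ℝ := fun i =>
    if ((W i)ᶜ).Nonempty then fun x => infDist x (W i)ᶜ else fun _ => 1 with hf
  have hfcont : ∀ i, Continuous (f i) := by
    intro i
    by_cases h : ((W i)ᶜ).Nonempty <;> simp only [hf, h, if_true, if_false]
    · exact continuous_infDist_pt _
    · exact continuous_const
  have hfnonneg : ∀ i x, 0 ≤ f i x := by
    intro i x
    by_cases h : ((W i)ᶜ).Nonempty <;> simp only [hf, h, if_true, if_false]
    · exact infDist_nonneg
    · norm_num
  have hfpos : ∀ i x, x ∈ W i → 0 < f i x := by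
    intro i x hx
    by_cases h : ((W i)ᶜ).Nonempty
    · simp only [hf, h, if_true]
      exact (((hWo i).isClosed_compl).notMem_iff_infDist_pos h).mp (by simpa using hx)
    · simp only [hf, h, if_false]; norm_num
  have hfmem : ∀ i x, 0 < f i x → x ∈ W i := by
    intro i x hx
    by_contra hxc
    have hne : ((W i)ᶜ).Nonempty := ⟨x, hxc⟩
    have : f i x = 0 := by
      simp only [hf, hne, if_true]
      exact infDist_zero_of_mem hxc
    linarith
  refine ⟨fun i => F ∩ ⋂ j, {x | f j x ≤ 2 * f i x}, ?_, ?_, ?_⟩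
  · intro i
    exact hF.inter (isClosed_iInter fun j =>
      isClosed_le (hfcont j) (continuous_const.mul (hfcont i)))
  · intro i x hx
    obtain ⟨hxF, hxI⟩ := hx
    refine ⟨?_, hxF⟩
    obtain ⟨j, hj⟩ := Set.mem_iUnion.mp (hcov hxF)
    have h1 : 0 < f j x := hfpos j x hj
    have h2 : f j x ≤ 2 * f i x := Set.mem_iInter.mp hxI j
    exact hfmem i x (by linarith)
  · intro x hx
    obtain ⟨j0, hj0⟩ := Set.mem_iUnion.mp (hcov hx)
    obtain ⟨i0, _, hmax⟩ := Set.exists_max_image Set.univ (fun i => f i x)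
      (Set.toFinite _) ⟨j0, trivial⟩
    refine Set.mem_iUnion.mpr ⟨i0, hx, Set.mem_iInter.mpr fun j => ?_⟩
    have h1 : f j x ≤ f i0 x := hmax j trivial
    have h2 : 0 ≤ f i0 x := hfnonneg i0 x
    show f j x ≤ 2 * f i0 x
    linarith

/-- Key lemma: if `F` is closed with relative dimension ≤ k, any finite open cover of the
whole space has an open shrinking whose order is ≤ k+1 on an open neighborhood of `F`. -/
lemma key_shrink {k : ℕ} {F : Set X} (hF : IsClosed F) (hrel : RelDim F k)
    {ι : Type} [Finite ι] (U : ι → Set X) (hop : ∀ i, IsOpen (U i))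
    (hcov : (⋃ i, U i) = Set.univ) :
    ∃ V : ι → Set X, (∀ i, IsOpen (V i)) ∧ (∀ i, V i ⊆ U i) ∧ (⋃ i, V i) = Set.univ ∧
      ∃ O : Set X, IsOpen O ∧ F ⊆ O ∧ ∀ x ∈ O, {i | x ∈ V i}.ncard ≤ k + 1 := by
  obtain ⟨W, hWo, hWU, hWcov, hWord⟩ := hrel ι U ‹Finite ι› hop
    (by rw [hcov]; exact Set.subset_univ F)
  obtain ⟨D, hDc, hDWF, hDcov⟩ := metric_closed_shrink hF W hWo hWcov
  have hDord : ∀ x, {i | x ∈ D i}.ncard ≤ k + 1 := by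
    intro x
    by_cases hx : x ∈ F
    · exact le_trans (Set.ncard_le_ncard (fun i hi => (hDWF i hi).1) (Set.toFinite _))
        (hWord x hx)
    · have : {i | x ∈ D i} = ∅ := Set.eq_empty_of_forall_notMem fun i hi => hx (hDWF i hi).2
      simp [this]
  obtain ⟨G, hGo, hDG, hGW, hGord⟩ := metric_swelling D W hDc
    (fun i => (hDWF i).trans Set.inter_subset_left) hWo hDord
  have hFG : F ⊆ ⋃ i, G i := hDcov.trans (Set.iUnion_mono hDG)
  obtain ⟨O, hOo, hFO, hOcl⟩ := normal_exists_closure_subset hF (isOpen_iUnion hGo) hFG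
  refine ⟨fun i => G i ∪ (U i \ closure O),
    fun i => (hGo i).union ((hop i).sdiff isClosed_closure),
    fun i => Set.union_subset ((hGW i).trans (hWU i)) Set.diff_subset,
    ?_, O, hOo, hFO, ?_⟩
  · apply Set.eq_univ_of_forall
    intro x
    by_cases hx : x ∈ closure O
    · obtain ⟨i, hi⟩ := Set.mem_iUnion.mp (hOcl hx)
      exact Set.mem_iUnion.mpr ⟨i, Or.inl hi⟩
    · have : x ∈ ⋃ i, U i := by rw [hcov]; trivial
      obtain ⟨i, hi⟩ := Set.mem_iUnion.mp this
      exact Set.mem_iUnion.mpr ⟨i, Or.inr ⟨hi, hx⟩⟩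
  · intro x hxO
    have hsub : {i | x ∈ G i ∪ (U i \ closure O)} ⊆ {i | x ∈ G i} := by
      intro i hi
      rcases hi with hi | hi
      · exact hi
      · exact absurd (subset_closure hxO) hi.2
    exact le_trans (Set.ncard_le_ncard hsub (Set.toFinite _)) (hGord x)

/-- The main combination: a space covered by a closed set and another set, both of relative
dimension ≤ k, has covering dimension ≤ k. -/
lemma main_union {k : ℕ} {A B : Set X} (hU : A ∪ B = Set.univ) (hA : IsClosed A)
    (hrA : RelDim A k) (hrB : RelDim B k) : covDimLE X k := by
  intro ι U hfin hop hcov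
  haveI := hfin
  obtain ⟨V, hVo, hVU, hVcov, O₁, hO₁o, hAO₁, hord₁⟩ := key_shrink hA hrA U hop hcov
  have hF₂B : O₁ᶜ ⊆ B := by
    intro x hx
    have hxAB : x ∈ A ∪ B := by rw [hU]; trivial
    rcases hxAB with hxA | hxB
    · exact absurd (hAO₁ hxA) hx
    · exact hxB
  have hrF₂ : RelDim (O₁ᶜ) k := relDim_closed_mono hrB hF₂B hO₁o.isClosed_compl
  obtain ⟨V', hV'o, hV'V, hV'cov, O₂, hO₂o, hF₂O₂, hord₂⟩ :=
    key_shrink hO₁o.isClosed_compl hrF₂ V hVo hVcov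
  refine ⟨V', hV'o, fun i => (hV'V i).trans (hVU i), hV'cov,
    fun x => ⟨Set.toFinite _, ?_⟩⟩
  by_cases hx : x ∈ O₂
  · exact hord₂ x hx
  · have hxO₁ : x ∈ O₁ := by
      by_contra h
      exact hx (hF₂O₂ h)
    exact le_trans (Set.ncard_le_ncard (fun i hi => hV'V i hi) (Set.toFinite _))
      (hord₁ x hxO₁)

end MetricPart

theorem stmt2 {X : Type*} [MetricSpace X] [TopologicalSpace.SeparableSpace X]
    (k : ℕ) (A B : Set X)
    (hA : covDimLE A k) (hB : covDimLE B k)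
    (hclosed : closure A ∩ (A ∪ B) ⊆ A) :
    covDimLE ↥(A ∪ B) k := by
  have hA' : RelDim (((↑) : ↥(A ∪ B) → X) ⁻¹' A) k :=
    relDim_pullback Set.subset_union_left (covDimLE_to_relDim hA)
  have hB' : RelDim (((↑) : ↥(A ∪ B) → X) ⁻¹' B) k :=
    relDim_pullback Set.subset_union_right (covDimLE_to_relDim hB)
  have hclosedA' : IsClosed (((↑) : ↥(A ∪ B) → X) ⁻¹' A) := by
    apply isClosed_of_closure_subset
    intro x hx
    have h1 : (↑x : X) ∈ closure (((↑) : ↥(A ∪ B) → X) '' (((↑) : ↥(A ∪ B) → X) ⁻¹' A)) :=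
      closure_subtype.mp hx
    rw [Subtype.image_preimage_coe] at h1
    have h2 : (↑x : X) ∈ closure A := closure_mono Set.inter_subset_right h1
    exact hclosed ⟨h2, x.2⟩
  have hunion : (((↑) : ↥(A ∪ B) → X) ⁻¹' A) ∪ (((↑) : ↥(A ∪ B) → X) ⁻¹' B) = Set.univ := by
    ext x
    simp only [Set.mem_univ, iff_true]
    exact x.2
  exact main_union hunion hclosedA' hA' hB'
end

section
/- Let X be a simply connected, locally path-connected topological space and U, V ⊆ X open connected sets with U ∪ V = X. Then U ∩ V is connected. -/
/-!
A map `g : X → Bool` continuous on `U ∩ V` is a Čech 1-cocycle of the cover `{U, V}`. Gluing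
`U × Bool` and `V × Bool` along it gives a double cover of `X`, which has a continuous section
because `X` is simply connected and locally path-connected. Reading the section in the two
charts writes `g = σU xor σV` on `U ∩ V`, with `σU`, `σV` continuous on `U`, `V`. When `U` and
`V` are connected, `σU` and `σV` are constant, hence so is `g`.
-/

open Set

section

variable {X : Type*} [TopologicalSpace X]

open scoped Classical in
/-- The sheets of `U × Bool` and `V × Bool` are swapped over the points of `U ∩ V` where `g` is
`true`; the chart index `false` stands for `U`, `true` for `V`. -/
noncomputable def twistedDoubleCover {U V : Set X} (hU : IsOpen U) (hV : IsOpen V)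
    (hcover : U ∪ V = univ) {g : X → Bool} (hg : ContinuousOn g (U ∩ V)) :
    FiberBundleCore Bool X Bool where
  baseSet i := cond i V U
  isOpen_baseSet i := by cases i <;> assumption
  indexAt x := decide (x ∉ U)
  mem_baseSet_at x := by
    by_cases hx : x ∈ U
    · simp [hx]
    · simpa [hx] using (hcover.symm ▸ mem_univ x : x ∈ U ∪ V).resolve_left hx
  coordChange i j x v := xor v (xor i j && g x)
  coordChange_self i _ _ v := by simp
  continuousOn_coordChange i j := by
    have hxor : Continuous fun q : Bool × Bool => xor q.1 q.2 := continuous_of_discreteTopology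
    cases i <;> cases j <;> simp only [Bool.xor_self, Bool.xor_false, Bool.xor_true,
      Bool.false_and, Bool.true_and, cond_false, cond_true]
    · exact continuous_snd.continuousOn
    · exact hxor.comp_continuousOn
        (continuous_snd.continuousOn.prodMk (hg.comp continuous_fst.continuousOn fun p hp => hp.1))
    · exact hxor.comp_continuousOn (continuous_snd.continuousOn.prodMk
        (hg.comp continuous_fst.continuousOn fun p hp => (inter_comm V U) ▸ hp.1))
    · exact continuous_snd.continuousOn
  coordChange_comp i j k x _ v := by
    cases i <;> cases j <;> cases k <;> cases v <;> cases g x <;> rfl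

theorem exists_continuousOn_xor_eq_of_simplyConnected [SimplyConnectedSpace X]
    [LocallyPathConnectedSpace X] {U V : Set X} (hU : IsOpen U) (hV : IsOpen V)
    (hcover : U ∪ V = univ) {g : X → Bool} (hg : ContinuousOn g (U ∩ V)) :
    ∃ σU σV : X → Bool, ContinuousOn σU U ∧ ContinuousOn σV V ∧
      ∀ x ∈ U ∩ V, xor (σU x) (σV x) = g x := by
  let Z := twistedDoubleCover hU hV hcover hg
  obtain ⟨x₀⟩ := (inferInstance : Nonempty X)
  obtain ⟨s, ⟨-, hs⟩, -⟩ := (FiberBundle.isCoveringMap (F := Bool) (E := Z.Fiber))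
    |>.existsUnique_continuousMap_lifts (ContinuousMap.id X) x₀ ⟨x₀, false⟩ rfl
  have hproj (x : X) : (s x).proj = x := congrFun hs x
  let σ (i : Bool) (x : X) : Bool := (Z.localTriv i (s x)).2
  have hσ (i : Bool) : ContinuousOn (σ i) (Z.baseSet i) :=
    continuous_snd.comp_continuousOn ((Z.localTriv i).continuousOn.comp s.continuous.continuousOn
      fun x hx => by simpa [hproj] using hx)
  refine ⟨σ false, σ true, hσ false, hσ true, fun x hx => ?_⟩
  have hglue : σ true x = xor (σ false x) (g x) := by
    simp only [σ, FiberBundleCore.localTriv_apply, hproj]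
    exact (Z.coordChange_comp _ false true x ⟨⟨Z.mem_baseSet_at x, hx.1⟩, hx.2⟩ _).symm
  rw [hglue, ← Bool.xor_assoc, Bool.xor_self, Bool.false_xor]

end

theorem stmt3 {X : Type*} [TopologicalSpace X] [SimplyConnectedSpace X]
    [LocallyPathConnectedSpace X]
    (U V : Set X) (hU : IsOpen U) (hV : IsOpen V)
    (hUc : IsConnected U) (hVc : IsConnected V)
    (hcover : U ∪ V = Set.univ) : IsConnected (U ∩ V) := by
  refine ⟨?_, isPreconnected_of_forall_constant fun g hg x hx y hy => ?_⟩
  · obtain ⟨u, hu⟩ := hUc.nonempty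
    obtain ⟨v, hv⟩ := hVc.nonempty
    simpa using isPreconnected_univ U V hU hV hcover.ge ⟨u, trivial, hu⟩ ⟨v, trivial, hv⟩
  obtain ⟨σU, σV, hσU, hσV, hglue⟩ :=
    exists_continuousOn_xor_eq_of_simplyConnected hU hV hcover hg
  rw [← hglue x hx, ← hglue y hy, hUc.isPreconnected.constant hσU hx.1 hy.1,
    hVc.isPreconnected.constant hσV hx.2 hy.2]
end

section
/- Let X be a locally connected topological space and p, q ∈ X. A closed subset A ⊆ X separates the points p and q (i.e., there exist subsets B₁, B₂ ⊆ X with p ∈ B₁, q ∈ B₂, cl(B₁) ∩ B₂ = ∅ = B₁ ∩ cl(B₂), and X \ A = B₁ ∪ B₂) if and only if p and q belong to distinct connected components of X \ A. -/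
theorem stmt4 {X : Type*} [TopologicalSpace X] [LocallyConnectedSpace X]
    (p q : X) (A : Set X) (hA : IsClosed A) (hp : p ∉ A) (hq : q ∉ A) :
    (∃ B₁ B₂ : Set X, p ∈ B₁ ∧ q ∈ B₂ ∧ closure B₁ ∩ B₂ = ∅ ∧ B₁ ∩ closure B₂ = ∅ ∧
        Aᶜ = B₁ ∪ B₂) ↔
      connectedComponentIn Aᶜ p ≠ connectedComponentIn Aᶜ q := by
  constructor
  · rintro ⟨B₁, B₂, hpB, hqB, h12, h21, hU⟩ heq
    set s := connectedComponentIn Aᶜ p with hs_def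
    have hs : IsPreconnected s := isPreconnected_connectedComponentIn
    have hsA : s ⊆ Aᶜ := connectedComponentIn_subset _ _
    have hps : p ∈ s := mem_connectedComponentIn hp
    have hqs : q ∈ s := by
      have h := mem_connectedComponentIn (F := Aᶜ) hq
      rwa [← heq] at h
    -- show s ⊆ closure B₁
    have hsubUV : s ⊆ (closure B₂)ᶜ ∪ (closure B₁)ᶜ := by
      intro x hx
      have hx' : x ∈ B₁ ∪ B₂ := by rw [← hU]; exact hsA hx
      rcases hx' with h | h
      · left
        intro hc
        exact Set.eq_empty_iff_forall_notMem.mp h21 x ⟨h, hc⟩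
      · right
        intro hc
        exact Set.eq_empty_iff_forall_notMem.mp h12 x ⟨hc, h⟩
    have hempty : ¬ (s ∩ ((closure B₂)ᶜ ∩ (closure B₁)ᶜ)).Nonempty := by
      rintro ⟨x, hxs, hx2, hx1⟩
      have hx' : x ∈ B₁ ∪ B₂ := by rw [← hU]; exact hsA hxs
      rcases hx' with h | h
      · exact hx1 (subset_closure h)
      · exact hx2 (subset_closure h)
    have hnotV : ¬ (s ∩ (closure B₁)ᶜ).Nonempty := by
      intro hV
      exact hempty (hs _ _ (isClosed_closure.isOpen_compl)
        (isClosed_closure.isOpen_compl) hsubUV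
        ⟨p, hps, fun hc => Set.eq_empty_iff_forall_notMem.mp h21 p ⟨hpB, hc⟩⟩ hV)
    have hqcl : q ∈ closure B₁ := by
      by_contra hc
      exact hnotV ⟨q, hqs, hc⟩
    exact Set.eq_empty_iff_forall_notMem.mp h12 q ⟨hqcl, hqB⟩
  · intro hne
    have hopen : IsOpen (Aᶜ) := hA.isOpen_compl
    set B₁ := connectedComponentIn Aᶜ p with hB₁
    set B₂ := Aᶜ \ B₁ with hB₂
    have hB₁open : IsOpen B₁ := hopen.connectedComponentIn
    have hB₁A : B₁ ⊆ Aᶜ := connectedComponentIn_subset _ _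
    have hcomp_sub : ∀ y ∈ B₂, connectedComponentIn Aᶜ y ⊆ B₂ := by
      intro y hy z hz
      refine ⟨connectedComponentIn_subset _ _ hz, fun hzB₁ => hy.2 ?_⟩
      have h1 : connectedComponentIn Aᶜ p = connectedComponentIn Aᶜ z :=
        connectedComponentIn_eq hzB₁
      have h2 : connectedComponentIn Aᶜ y = connectedComponentIn Aᶜ z :=
        connectedComponentIn_eq hz
      rw [hB₁, h1, ← h2]
      exact mem_connectedComponentIn hy.1
    have hB₂open : IsOpen B₂ := by
      rw [isOpen_iff_mem_nhds]
      intro y hy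
      exact Filter.mem_of_superset
        ((hopen.connectedComponentIn).mem_nhds (mem_connectedComponentIn hy.1))
        (hcomp_sub y hy)
    have hqB₂ : q ∈ B₂ := by
      refine ⟨hq, fun hc => hne ?_⟩
      exact connectedComponentIn_eq hc
    refine ⟨B₁, B₂, mem_connectedComponentIn hp, hqB₂, ?_, ?_, ?_⟩
    · have : B₂ ∩ closure B₁ ⊆ closure (B₂ ∩ B₁) := hB₂open.inter_closure
      rw [Set.eq_empty_iff_forall_notMem]
      rintro x ⟨hx1, hx2⟩
      have := this ⟨hx2, hx1⟩
      rw [show B₂ ∩ B₁ = ∅ by simp [hB₂, Set.diff_inter_self], closure_empty] at this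
      exact this
    · have : B₁ ∩ closure B₂ ⊆ closure (B₁ ∩ B₂) := hB₁open.inter_closure
      rw [Set.eq_empty_iff_forall_notMem]
      rintro x ⟨hx1, hx2⟩
      have := this ⟨hx1, hx2⟩
      rw [show B₁ ∩ B₂ = ∅ by
        rw [Set.eq_empty_iff_forall_notMem]; rintro z ⟨h1, h2⟩; exact h2.2 h1,
        closure_empty] at this
      exact this
    · rw [hB₂, Set.union_diff_self, Set.union_eq_self_of_subset_left hB₁A]
end

section
/- Let X be a metric space, A, B ⊆ X closed subsets, S ⊆ A ∪ B a compact connected set meeting both A and B, and S_A a connected component of S ∩ A. Then S_A ∩ B ≠ ∅. -/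
/-!
In a compact Hausdorff space components coincide with quasi-components. So if the component
of `x` in the compact set `S ∩ A` missed `B`, some relatively clopen piece `K ∋ x` of `S ∩ A`
would miss `B` as well. As `S ∩ Bᶜ ⊆ A`, such a `K` is also relatively open in `S`, and it is
closed, so the connected set `S` would lie in `K`, contradicting `(S ∩ B).Nonempty`.
-/

open Set

theorem exists_isClopen_of_connectedComponent_subset {X : Type*} [TopologicalSpace X]
    [T2Space X] [CompactSpace X] {x : X} {U : Set X} (hU : IsOpen U)
    (h : connectedComponent x ⊆ U) : ∃ K : Set X, IsClopen K ∧ x ∈ K ∧ K ⊆ U := by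
  let N := { s : Set X // IsClopen s ∧ x ∈ s }
  have : Nonempty N := ⟨⟨univ, isClopen_univ, mem_univ x⟩⟩
  have hdir : Directed (· ⊇ ·) fun s : N => s.val := by
    rintro ⟨s, hs, hxs⟩ ⟨t, ht, hxt⟩
    exact ⟨⟨s ∩ t, hs.inter ht, hxs, hxt⟩, inter_subset_left, inter_subset_right⟩
  have hnhds : ∀ z ∈ ⋂ s : N, s.val, U ∈ nhds z := fun z hz =>
    hU.mem_nhds (h (by rwa [connectedComponent_eq_iInter_isClopen]))
  obtain ⟨⟨K, hK, hxK⟩, hKU⟩ :=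
    exists_subset_nhds_of_compactSpace hdir (fun s : N => s.property.1.1) hnhds
  exact ⟨K, hK, hxK, hKU⟩

theorem IsCompact.exists_isOpen_isClosed_inter_subset_of_connectedComponentIn_subset
    {X : Type*} [TopologicalSpace X] [T2Space X] {C U : Set X} (hC : IsCompact C)
    (hU : IsOpen U) {x : X} (hx : x ∈ C) (h : connectedComponentIn C x ⊆ U) :
    ∃ V : Set X, IsOpen V ∧ x ∈ V ∧ IsClosed (C ∩ V) ∧ C ∩ V ⊆ U := by
  have := isCompact_iff_compactSpace.mp hC
  rw [connectedComponentIn_eq_image hx, image_subset_iff] at h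
  obtain ⟨K, hK, hxK, hKU⟩ :=
    exists_isClopen_of_connectedComponent_subset (hU.preimage continuous_subtype_val) h
  obtain ⟨V, hV, rfl⟩ := isOpen_induced_iff.mp hK.isOpen
  refine ⟨V, hV, hxK, ?_, ?_⟩ <;> rw [← Subtype.image_preimage_coe]
  · exact (hK.isClosed.isCompact.image continuous_subtype_val).isClosed
  · exact image_subset_iff.mpr hKU

theorem IsCompact.connectedComponentIn_inter_meets_of_subset_union {X : Type*}
    [TopologicalSpace X] [T2Space X] {A B S : Set X} (hSc : IsCompact S) (hS : IsPreconnected S)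
    (hA : IsClosed A) (hB : IsClosed B) (hSAB : S ⊆ A ∪ B)
    (hSB : (S ∩ B).Nonempty) {x : X} (hx : x ∈ S ∩ A) :
    (connectedComponentIn (S ∩ A) x ∩ B).Nonempty := by
  by_contra hdisj
  have hsub : connectedComponentIn (S ∩ A) x ⊆ Bᶜ := fun z hz hzB => hdisj ⟨z, hz, hzB⟩
  obtain ⟨V, hV, hxV, hK, hKB⟩ :=
    (hSc.inter_right hA).exists_isOpen_isClosed_inter_subset_of_connectedComponentIn_subset
      hB.isOpen_compl hx hsub
  have hcover : S ⊆ (V ∩ Bᶜ) ∪ (S ∩ A ∩ V)ᶜ := fun s hs => by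
    by_cases hsK : s ∈ S ∩ A ∩ V
    · exact Or.inl ⟨hsK.2, hKB hsK⟩
    · exact Or.inr hsK
  have hdisjoint : S ∩ ((V ∩ Bᶜ) ∩ (S ∩ A ∩ V)ᶜ) = ∅ := by
    ext s
    simp only [mem_inter_iff, mem_compl_iff, mem_empty_iff_false, iff_false]
    rintro ⟨hs, ⟨hsV, hsB⟩, hsK⟩
    exact hsK ⟨⟨hs, (hSAB hs).resolve_right hsB⟩, hsV⟩
  rcases isPreconnected_iff_subset_of_disjoint.mp hS _ _ (hV.inter hB.isOpen_compl)
      hK.isOpen_compl hcover hdisjoint with hSV | hSK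
  · obtain ⟨b, hbS, hbB⟩ := hSB
    exact (hSV hbS).2 hbB
  · exact hSK hx.1 ⟨hx, hxV⟩

theorem stmt5_general {X : Type*} [MetricSpace X] (A B S SA : Set X)
    (hA : IsClosed A) (hB : IsClosed B) (hS : S ⊆ A ∪ B)
    (hSc : IsCompact S) (hSconn : IsConnected S)
    (hSB : (S ∩ B).Nonempty)
    (x : X) (hx : x ∈ S ∩ A) (hcomp : SA = connectedComponentIn (S ∩ A) x) :
    (SA ∩ B).Nonempty :=
  hcomp ▸ hSc.connectedComponentIn_inter_meets_of_subset_union hSconn.isPreconnected hA hB hS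
    hSB hx

theorem stmt5 {X : Type*} [MetricSpace X] (A B S SA : Set X)
    (hA : IsClosed A) (hB : IsClosed B) (hS : S ⊆ A ∪ B)
    (hSc : IsCompact S) (hSconn : IsConnected S)
    (hSA : (S ∩ A).Nonempty) (hSB : (S ∩ B).Nonempty)
    (x : X) (hx : x ∈ S ∩ A) (hcomp : SA = connectedComponentIn (S ∩ A) x) :
    (SA ∩ B).Nonempty :=
  stmt5_general A B S SA hA hB hS hSc hSconn hSB x hx hcomp
end

section
/- Let n ≥ 1, i ∈ {1,…,n}, and A ⊆ [0,1]^n a compact set that separates the i-th opposite faces of [0,1]^n (i.e., no connected component of [0,1]^n \ A meets both the face {x : x_i = 0} and the face {x : x_i = 1}). Then there exists a compact connected subset S ⊆ A that separates the i-th opposite faces of [0,1]^n. -/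
def unitCube (n : ℕ) : Set (Fin n → ℝ) := Set.Icc 0 1

def face (n : ℕ) (i : Fin n) (v : ℝ) : Set (Fin n → ℝ) := {x ∈ unitCube n | x i = v}

/-- `A` connects the `i`-th opposite faces of the unit cube: some connected subset of `A`
meets both faces. -/
def Connects (n : ℕ) (i : Fin n) (A : Set (Fin n → ℝ)) : Prop :=
  ∃ S ⊆ A, IsPreconnected S ∧ (S ∩ face n i 0).Nonempty ∧ (S ∩ face n i 1).Nonempty

/-- `A` separates the `i`-th opposite faces of the unit cube. -/
def Separates (n : ℕ) (i : Fin n) (A : Set (Fin n → ℝ)) : Prop :=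
  ¬ Connects n i (unitCube n \ A)

/-- `U` is open in the subspace topology of the unit cube. -/
def OpenInCube (n : ℕ) (U : Set (Fin n → ℝ)) : Prop :=
  ∃ V : Set (Fin n → ℝ), IsOpen V ∧ U = V ∩ unitCube n

/-!
Suppose no compact connected subset of `A` separates the faces. Then every component `C` of `A`
is avoided by a compact connected set `T` joining the faces (a path in a thickening of the
complement), and since `C` is the intersection of the clopen subsets of `A` containing it, some
clopen piece of `A` around `C` misses `T` as well. Finitely many such pieces cover `A`, so `A` is a
finite union of disjoint compact sets none of which separates the faces. This contradicts
Janiszewski's theorem for the cube: if disjoint closed sets `A` and `B` do not separate the faces,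
neither does `A ∪ B`.

For Janiszewski's theorem, let `f` be a Urysohn function with `f⁻¹ 0 = A` and `f⁻¹ 1 = B`. The map
to `ℝ / 2ℤ` equal to `f` on the part of the complement reaching face `0` and to `-f` on the rest is
continuous, and lifts to `G : cube → ℝ` because the cube is simply connected. `G` takes even
integer values only on `A` and odd ones only on `B`, while on the two faces it stays in bands
`[2k, 2k + 1]` and `[2k' - 1, 2k']`. Intermediate values along connected sets joining the faces
while avoiding `A`, respectively `B`, first force `k' = k + 1` and then an odd value off `B`.
-/

open Set Topology Metric

theorem Convex.exists_lift_addCircle {E : Type*} [AddCommGroup E] [Module ℝ E]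
    [TopologicalSpace E] [IsTopologicalAddGroup E] [ContinuousSMul ℝ E] [LocallyConvexSpace ℝ E]
    {K : Set E} (hK : Convex ℝ K) {p : ℝ} {θ : E → AddCircle p} (hθ : ContinuousOn θ K) :
    ∃ G : E → ℝ, ContinuousOn G K ∧ ∀ x ∈ K, (G x : AddCircle p) = θ x := by
  classical
  rcases K.eq_empty_or_nonempty with rfl | ⟨x₀, hx₀⟩
  · exact ⟨0, continuousOn_empty _, fun _ => False.elim⟩
  have := hK.contractibleSpace ⟨x₀, hx₀⟩
  have := hK.locallyPathConnectedSpace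
  obtain ⟨e₀, he₀⟩ := QuotientAddGroup.mk_surjective (θ x₀)
  obtain ⟨F, ⟨-, hF⟩, -⟩ := (AddCircle.isCoveringMap_coe p).existsUnique_continuousMap_lifts
    ⟨K.domRestrict θ, hθ.domRestrict⟩ ⟨x₀, hx₀⟩ e₀ he₀
  refine ⟨fun x => if hx : x ∈ K then F ⟨x, hx⟩ else 0, ?_, fun x hx => ?_⟩
  · rw [continuousOn_iff_continuous_domRestrict]
    convert F.continuous
    ext x
    simp [x.2]
  · simpa [hx] using congr_fun hF ⟨x, hx⟩

theorem exists_continuous_eq_zero_iff_eq_one_iff {X : Type*} [PseudoMetricSpace X]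
    {A B : Set X} (hA : IsClosed A) (hB : IsClosed B) (hAne : A.Nonempty) (hBne : B.Nonempty)
    (hAB : Disjoint A B) :
    ∃ f : X → ℝ, Continuous f ∧ (∀ x, f x ∈ Icc 0 1) ∧ (∀ x, f x = 0 ↔ x ∈ A) ∧
      (∀ x, f x = 1 ↔ x ∈ B) := by
  have hpos : ∀ x, 0 < infDist x A + infDist x B := by
    intro x
    by_cases hx : x ∈ A
    · have := (hB.notMem_iff_infDist_pos hBne).1 (hAB.notMem_of_mem_left hx)
      linarith [infDist_nonneg (x := x) (s := A)]
    · have := (hA.notMem_iff_infDist_pos hAne).1 hx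
      linarith [infDist_nonneg (x := x) (s := B)]
  refine ⟨fun x => infDist x A / (infDist x A + infDist x B), ?_, fun x => ⟨?_, ?_⟩,
    fun x => ?_, fun x => ?_⟩
  · exact (continuous_infDist_pt A).div
      ((continuous_infDist_pt A).add (continuous_infDist_pt B)) fun x => (hpos x).ne'
  · exact div_nonneg infDist_nonneg (hpos x).le
  · exact (div_le_one (hpos x)).2 (le_add_of_nonneg_right infDist_nonneg)
  · rw [div_eq_zero_iff, or_iff_left (hpos x).ne', ← hA.mem_iff_infDist_zero hAne]
  · rw [div_eq_one_iff_eq (hpos x).ne', left_eq_add, ← hB.mem_iff_infDist_zero hBne]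

theorem IsPreconnected.exists_int_forall_sub_mem_Icc {X : Type*} [TopologicalSpace X]
    {S : Set X} (hS : IsPreconnected S) {G : X → ℝ} (hG : ContinuousOn G S) {c : ℝ}
    (hband : ∀ x ∈ S, ∃ k : ℤ, G x - 2 * k ∈ Icc c (c + 1)) :
    ∃ k : ℤ, ∀ x ∈ S, G x - 2 * k ∈ Icc c (c + 1) := by
  rcases S.eq_empty_or_nonempty with rfl | ⟨x₀, hx₀⟩
  · exact ⟨0, fun _ => False.elim⟩
  obtain ⟨k₀, hk₀⟩ := hband x₀ hx₀
  -- the values `2 k₀ + c - 1/2` and `2 k₀ + c + 3/2` lie in no band, so `G` cannot cross them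
  have hgap : ∀ z ∈ S, G z ≠ 2 * k₀ + c - 1 / 2 ∧ G z ≠ 2 * k₀ + c + 3 / 2 := by
    intro z hz
    obtain ⟨k, hk⟩ := hband z hz
    constructor <;> rintro hGz <;> rw [hGz] at hk
    · have h₁ : k < k₀ := by exact_mod_cast (by linarith [hk.1] : (k : ℝ) < k₀)
      have h₂ : k₀ - 1 < k := by exact_mod_cast (by linarith [hk.2] : (k₀ : ℝ) - 1 < k)
      omega
    · have h₁ : k < k₀ + 1 := by exact_mod_cast (by linarith [hk.1] : (k : ℝ) < k₀ + 1)
      have h₂ : k₀ < k := by exact_mod_cast (by linarith [hk.2] : (k₀ : ℝ) < k)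
      omega
  refine ⟨k₀, fun x hx => ?_⟩
  obtain ⟨k, hk⟩ := hband x hx
  obtain rfl : k = k₀ := by
    by_contra hne
    rcases lt_or_gt_of_ne hne with hlt | hgt
    · have : (k : ℝ) + 1 ≤ k₀ := by exact_mod_cast hlt
      obtain ⟨z, hz, hGz⟩ := hS.intermediate_value hx hx₀ hG
        (show 2 * k₀ + c - 1 / 2 ∈ Icc (G x) (G x₀) from
          ⟨by linarith [hk.2], by linarith [hk₀.1]⟩)
      exact (hgap z hz).1 hGz
    · have : (k₀ : ℝ) + 1 ≤ k := by exact_mod_cast hgt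
      obtain ⟨z, hz, hGz⟩ := hS.intermediate_value hx₀ hx hG
        (show 2 * k₀ + c + 3 / 2 ∈ Icc (G x₀) (G x) from
          ⟨by linarith [hk₀.2], by linarith [hk.1]⟩)
      exact (hgap z hz).2 hGz
  exact hk

theorem exists_isClopen_mem_disjoint_of_disjoint_connectedComponent {X : Type*}
    [TopologicalSpace X] [T2Space X] [CompactSpace X] {x : X} {K : Set X} (hK : IsClosed K)
    (hdisj : Disjoint K (connectedComponent x)) :
    ∃ s, IsClopen s ∧ x ∈ s ∧ Disjoint K s := by
  rw [connectedComponent_eq_iInter_isClopen, disjoint_iff_inter_eq_empty] at hdisj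
  obtain ⟨t, ht⟩ := hK.isCompact.elim_finite_subfamily_closed _ (fun s => s.2.1.isClosed) hdisj
  exact ⟨⋂ s ∈ t, s, isClopen_biInter_finset fun s _ => s.2.1,
    mem_iInter₂.2 fun s _ => s.2.2, disjoint_iff_inter_eq_empty.2 ht⟩

theorem Convex.exists_lift_neg_on_of_isOpen {E : Type*} [NormedAddCommGroup E]
    [NormedSpace ℝ E] {K U V : Set E} (hK : Convex ℝ K) {f : E → ℝ} (hf : Continuous f)
    (hU : IsOpen U) (hV : IsOpen V) (hUV : Disjoint U V)
    (hf01 : ∀ x ∈ K, x ∉ U → x ∉ V → f x = 0 ∨ f x = 1) :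
    ∃ G : E → ℝ, ContinuousOn G K ∧ (∀ x ∈ K, x ∈ V → ∃ k : ℤ, G x - 2 * k = -f x) ∧
      ∀ x ∈ K, x ∉ V → ∃ k : ℤ, G x - 2 * k = f x := by
  classical
  set θ : E → AddCircle (2 : ℝ) :=
    V.piecewise (fun x => ((-f x : ℝ) : AddCircle (2 : ℝ))) fun x => (f x : AddCircle (2 : ℝ))
  have hfront : ∀ x ∈ K ∩ frontier V, ((-f x : ℝ) : AddCircle (2 : ℝ)) = f x := by
    rintro x ⟨hxK, hxV⟩
    rw [hV.frontier_eq] at hxV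
    have hxU : x ∉ U := fun hxU => (hUV.closure_right hU).notMem_of_mem_left hxU hxV.1
    rcases hf01 x hxK hxU hxV.2 with hx | hx
    · simp [hx]
    · rw [hx, ← AddCircle.coe_add_period]
      norm_num
  obtain ⟨G, hG, hGθ⟩ := hK.exists_lift_addCircle (θ := θ) <| ContinuousOn.piecewise hfront
    (by fun_prop : Continuous fun x => ((-f x : ℝ) : AddCircle (2 : ℝ))).continuousOn
    (by fun_prop : Continuous fun x => ((f x : ℝ) : AddCircle (2 : ℝ))).continuousOn
  have hGk : ∀ x ∈ K, ∀ y : ℝ, (y : AddCircle (2 : ℝ)) = θ x → ∃ k : ℤ, G x - 2 * k = y := by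
    intro x hx y hy
    obtain ⟨k, hk⟩ := (AddCircle.coe_eq_zero_iff 2).1
      (by rw [AddCircle.coe_sub, hGθ x hx, hy, sub_self] :
        ((G x - y : ℝ) : AddCircle (2 : ℝ)) = 0)
    exact ⟨k, by rw [zsmul_eq_mul] at hk; linarith⟩
  exact ⟨G, hG, fun x hx hxV => hGk x hx _ (by simp [θ, hxV]),
    fun x hx hxV => hGk x hx _ (by simp [θ, hxV])⟩

theorem Convex.exists_angle_function {E : Type*} [NormedAddCommGroup E] [NormedSpace ℝ E]
    {K A B U V : Set E} (hK : Convex ℝ K) (hA : IsClosed A) (hB : IsClosed B)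
    (hAne : A.Nonempty) (hBne : B.Nonempty) (hAB : Disjoint A B) (hU : IsOpen U)
    (hV : IsOpen V) (hUV : Disjoint U V) (hcover : K \ (A ∪ B) ⊆ U ∪ V) :
    ∃ G : E → ℝ, ContinuousOn G K ∧
      (∀ x ∈ K, x ∉ V → ∃ k : ℤ, G x - 2 * k ∈ Icc 0 1) ∧
      (∀ x ∈ K, x ∉ U → ∃ k : ℤ, G x - 2 * k ∈ Icc (-1) 0) ∧
      (∀ x ∈ K, x ∉ A → ∀ k : ℤ, G x ≠ 2 * k) ∧
      (∀ x ∈ K, x ∉ B → ∀ k : ℤ, G x ≠ 2 * k + 1) := by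
  obtain ⟨f, hf, hf01, hf0, hf1⟩ :=
    exists_continuous_eq_zero_iff_eq_one_iff hA hB hAne hBne hAB
  have hAB_of : ∀ x ∈ K, x ∉ U → x ∉ V → x ∈ A ∪ B := fun x hx hxU hxV => by
    by_contra h
    rcases hcover ⟨hx, h⟩ with h' | h'
    exacts [hxU h', hxV h']
  obtain ⟨G, hG, hGV, hGV'⟩ := hK.exists_lift_neg_on_of_isOpen hf hU hV hUV fun x hx hxU hxV =>
    (hAB_of x hx hxU hxV).imp (hf0 x).2 (hf1 x).2
  have hGabs : ∀ x ∈ K, ∃ k : ℤ, |G x - 2 * k| = f x := fun x hx => by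
    by_cases hxV : x ∈ V
    · obtain ⟨k, hk⟩ := hGV x hx hxV
      exact ⟨k, by rw [hk, abs_neg, abs_of_nonneg (hf01 x).1]⟩
    · obtain ⟨k, hk⟩ := hGV' x hx hxV
      exact ⟨k, by rw [hk, abs_of_nonneg (hf01 x).1]⟩
  refine ⟨G, hG, fun x hx hxV => ?_, fun x hx hxU => ?_, fun x hx hxA m hm => ?_,
    fun x hx hxB m hm => ?_⟩
  · obtain ⟨k, hk⟩ := hGV' x hx hxV
    exact ⟨k, hk ▸ hf01 x⟩
  · by_cases hxV : x ∈ V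
    · obtain ⟨k, hk⟩ := hGV x hx hxV
      exact ⟨k, by rw [hk]; exact ⟨by linarith [(hf01 x).2], by linarith [(hf01 x).1]⟩⟩
    obtain ⟨k, hk⟩ := hGV' x hx hxV
    rcases hAB_of x hx hxU hxV with hxA | hxB
    · exact ⟨k, by rw [hk, (hf0 x).2 hxA]; norm_num⟩
    · rw [(hf1 x).2 hxB] at hk
      exact ⟨k + 1, by push_cast; constructor <;> linarith⟩
  · obtain ⟨k, hk⟩ := hGabs x hx
    rw [hm, ← mul_sub] at hk
    have h₁ : 2 * (m - k) ≠ 0 := by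
      have : ((2 * (m - k) : ℤ) : ℝ) ≠ 0 := by
        push_cast
        rw [← abs_ne_zero, hk]
        exact fun h => hxA ((hf0 x).1 h)
      exact_mod_cast this
    have h₂ : -1 ≤ 2 * (m - k) ∧ 2 * (m - k) ≤ 1 := by
      exact_mod_cast abs_le.1 (hk ▸ (hf01 x).2)
    omega
  · obtain ⟨k, hk⟩ := hGabs x hx
    rw [hm, show 2 * (m : ℝ) + 1 - 2 * k = ((2 * (m - k) + 1 : ℤ) : ℝ) by push_cast; ring] at hk
    have h₂ : -1 < 2 * (m - k) + 1 ∧ 2 * (m - k) + 1 < 1 := by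
      exact_mod_cast abs_lt.1 (hk ▸ lt_of_le_of_ne (hf01 x).2 fun h => hxB ((hf1 x).1 h))
    omega

section UnitCube

variable {n : ℕ}

theorem convex_unitCube : Convex ℝ (unitCube n) := convex_Icc 0 1

theorem face_subset_unitCube {i : Fin n} {v : ℝ} : face n i v ⊆ unitCube n := sep_subset _ _

theorem isPreconnected_face (i : Fin n) (v : ℝ) : IsPreconnected (face n i v) :=
  Convex.isPreconnected <| convex_unitCube.inter <|
    (convex_singleton v).linear_preimage (LinearMap.proj (R := ℝ) (φ := fun _ => ℝ) i)

theorem face_nonempty (i : Fin n) {v : ℝ} (hv : v ∈ Icc 0 1) : (face n i v).Nonempty :=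
  ⟨fun _ => v, ⟨fun _ => hv.1, fun _ => hv.2⟩, rfl⟩

theorem Separates.mono {i : Fin n} {A B : Set (Fin n → ℝ)} (hAB : A ⊆ B)
    (h : Separates n i A) : Separates n i B :=
  fun ⟨S, hS, hSc, h₀, h₁⟩ => h ⟨S, hS.trans (sdiff_subset_sdiff_right hAB), hSc, h₀, h₁⟩

theorem not_separates_empty (i : Fin n) : ¬Separates n i ∅ := fun h =>
  h ⟨unitCube n, sdiff_empty.ge, convex_unitCube.isPreconnected,
    by rw [inter_eq_right.2 face_subset_unitCube]; exact face_nonempty i (by simp),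
    by rw [inter_eq_right.2 face_subset_unitCube]; exact face_nonempty i (by simp)⟩

/-- For closed `D`, the open set `cubeProj n ⁻¹' Dᶜ` is a thickening of `unitCube n \ D` that
`cubeProj n` maps back into it. -/
def cubeProj (n : ℕ) (x : Fin n → ℝ) : Fin n → ℝ := fun j => max 0 (min 1 (x j))

theorem continuous_cubeProj : Continuous (cubeProj n) :=
  continuous_pi fun j => continuous_const.max (continuous_const.min (continuous_apply j))

theorem cubeProj_mem_unitCube (x : Fin n → ℝ) : cubeProj n x ∈ unitCube n :=
  ⟨fun _ => le_max_left _ _, fun _ => max_le zero_le_one (min_le_left _ _)⟩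

theorem cubeProj_eq_self {x : Fin n → ℝ} (hx : x ∈ unitCube n) : cubeProj n x = x :=
  funext fun j => by
    have h₀ : 0 ≤ x j := hx.1 j
    have h₁ : x j ≤ 1 := hx.2 j
    rw [cubeProj, min_eq_right h₁, max_eq_right h₀]

theorem mapsTo_cubeProj {D : Set (Fin n → ℝ)} :
    MapsTo (cubeProj n) (cubeProj n ⁻¹' Dᶜ) (unitCube n \ D) :=
  fun x hx => ⟨cubeProj_mem_unitCube x, hx⟩

theorem diff_subset_preimage_cubeProj {D : Set (Fin n → ℝ)} :
    unitCube n \ D ⊆ cubeProj n ⁻¹' Dᶜ :=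
  fun x hx => by simpa [cubeProj_eq_self hx.1] using hx.2

theorem Connects.exists_isCompact_isPreconnected {i : Fin n} {D : Set (Fin n → ℝ)}
    (hD : IsClosed D) (h : Connects n i (unitCube n \ D)) :
    ∃ T ⊆ unitCube n \ D, IsCompact T ∧ IsPreconnected T ∧ (T ∩ face n i 0).Nonempty ∧
      (T ∩ face n i 1).Nonempty := by
  obtain ⟨S, hSD, hS, ⟨x₀, hx₀S, hx₀⟩, ⟨x₁, hx₁S, hx₁⟩⟩ := h
  set O := cubeProj n ⁻¹' Dᶜ
  have hSO : S ⊆ O := hSD.trans diff_subset_preimage_cubeProj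
  have hOx₀ : IsPathConnected (connectedComponentIn O x₀) :=
    (hD.isOpen_compl.preimage continuous_cubeProj).connectedComponentIn
      |>.isConnected_iff_isPathConnected.1 (isConnected_connectedComponentIn_iff.2 (hSO hx₀S))
  obtain ⟨γ, hγ⟩ := hOx₀.joinedIn x₀ (mem_connectedComponentIn (hSO hx₀S)) x₁
    (hS.subset_connectedComponentIn hx₀S hSO hx₁S)
  refine ⟨cubeProj n '' range γ, ?_, (isCompact_range γ.continuous).image continuous_cubeProj,
    (isConnected_range γ.continuous).isPreconnected.image _ continuous_cubeProj.continuousOn,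
    ⟨x₀, ⟨γ 0, mem_range_self 0, ?_⟩, hx₀⟩, ⟨x₁, ⟨γ 1, mem_range_self 1, ?_⟩, hx₁⟩⟩
  · rintro _ ⟨_, ⟨t, rfl⟩, rfl⟩
    exact mapsTo_cubeProj (connectedComponentIn_subset _ _ (hγ t))
  · rw [γ.source, cubeProj_eq_self (face_subset_unitCube hx₀)]
  · rw [γ.target, cubeProj_eq_self (face_subset_unitCube hx₁)]

theorem Separates.exists_isOpen_cover {i : Fin n} {D : Set (Fin n → ℝ)} (hD : IsClosed D)
    (h : Separates n i D) :
    ∃ U V : Set (Fin n → ℝ), IsOpen U ∧ IsOpen V ∧ Disjoint U V ∧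
      unitCube n \ D ⊆ U ∪ V ∧ Disjoint (face n i 0) V ∧ Disjoint (face n i 1) U := by
  set O := cubeProj n ⁻¹' Dᶜ
  have hO : IsOpen O := hD.isOpen_compl.preimage continuous_cubeProj
  have hopen (q : Set (Fin n → ℝ) → Prop) :
      IsOpen {y | y ∈ O ∧ q (connectedComponentIn O y)} :=
    isOpen_iff_mem_nhds.2 fun y hy =>
      Filter.mem_of_superset (hO.connectedComponentIn.mem_nhds (mem_connectedComponentIn hy.1))
        fun z hz => ⟨connectedComponentIn_subset _ _ hz, connectedComponentIn_eq hz ▸ hy.2⟩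
  refine ⟨{y | y ∈ O ∧ (connectedComponentIn O y ∩ face n i 0).Nonempty},
    {y | y ∈ O ∧ ¬(connectedComponentIn O y ∩ face n i 0).Nonempty},
    hopen fun K => (K ∩ face n i 0).Nonempty, hopen fun K => ¬(K ∩ face n i 0).Nonempty,
    disjoint_left.2 fun y hU hV => hV.2 hU.2,
    fun y hy => (em _).imp (⟨diff_subset_preimage_cubeProj hy, ·⟩)
      (⟨diff_subset_preimage_cubeProj hy, ·⟩),
    disjoint_left.2 fun y hy hV => hV.2 ⟨y, mem_connectedComponentIn hV.1, hy⟩,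
    disjoint_left.2 fun y hy ⟨hyO, z, hzK, hz⟩ =>
      h ⟨cubeProj n '' connectedComponentIn O y, ?_,
        isPreconnected_connectedComponentIn.image _ continuous_cubeProj.continuousOn,
        ⟨z, ⟨z, hzK, cubeProj_eq_self (face_subset_unitCube hz)⟩, hz⟩,
        ⟨y, ⟨y, mem_connectedComponentIn hyO, cubeProj_eq_self (face_subset_unitCube hy)⟩, hy⟩⟩⟩
  exact (mapsTo_cubeProj.mono_left (connectedComponentIn_subset _ _)).image_subset

theorem not_separates_union {i : Fin n} {A B : Set (Fin n → ℝ)} (hA : IsClosed A)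
    (hB : IsClosed B) (hAB : Disjoint A B) (hA' : ¬Separates n i A) (hB' : ¬Separates n i B) :
    ¬Separates n i (A ∪ B) := by
  intro hsep
  rcases A.eq_empty_or_nonempty with rfl | hAne
  · exact hB' (by simpa using hsep)
  rcases B.eq_empty_or_nonempty with rfl | hBne
  · exact hA' (by simpa using hsep)
  obtain ⟨U, V, hU, hV, hUV, hcover, hV₀, hU₁⟩ := hsep.exists_isOpen_cover (hA.union hB)
  obtain ⟨G, hG, hGV, hGU, hGA, hGB⟩ :=
    convex_unitCube.exists_angle_function hA hB hAne hBne hAB hU hV hUV hcover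
  obtain ⟨k₀, hk₀⟩ := (isPreconnected_face i 0).exists_int_forall_sub_mem_Icc (c := 0)
    (hG.mono face_subset_unitCube) fun x hx => by
      simpa using hGV x (face_subset_unitCube hx) (hV₀.notMem_of_mem_left hx)
  obtain ⟨k₁, hk₁⟩ := (isPreconnected_face i 1).exists_int_forall_sub_mem_Icc (c := -1)
    (hG.mono face_subset_unitCube) fun x hx => by
      simpa using hGU x (face_subset_unitCube hx) (hU₁.notMem_of_mem_left hx)
  obtain ⟨TA, hTA, hTAc, ⟨a₀, ha₀, ha₀f⟩, ⟨a₁, ha₁, ha₁f⟩⟩ := not_not.1 hA'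
  obtain ⟨TB, hTB, hTBc, ⟨b₀, hb₀, hb₀f⟩, ⟨b₁, hb₁, hb₁f⟩⟩ := not_not.1 hB'
  have hk₀a := hk₀ a₀ ha₀f
  have hk₁a := hk₁ a₁ ha₁f
  have hk₀b := hk₀ b₀ hb₀f
  have hk₁b := hk₁ b₁ hb₁f
  have hk : k₁ = k₀ + 1 := by
    by_contra hne
    rcases lt_or_gt_of_ne hne with hlt | hgt
    · have : (k₁ : ℝ) ≤ k₀ := by exact_mod_cast (by omega : k₁ ≤ k₀)
      obtain ⟨z, hz, hGz⟩ := hTAc.intermediate_value ha₁ ha₀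
        (hG.mono fun x hx => (hTA hx).1)
        (show (2 * k₀ : ℝ) ∈ Icc (G a₁) (G a₀) from
          ⟨by linarith [hk₁a.2], by linarith [hk₀a.1]⟩)
      exact hGA z (hTA hz).1 (hTA hz).2 k₀ hGz
    · have : (k₀ : ℝ) + 2 ≤ k₁ := by exact_mod_cast (by omega : k₀ + 2 ≤ k₁)
      obtain ⟨z, hz, hGz⟩ := hTAc.intermediate_value ha₀ ha₁
        (hG.mono fun x hx => (hTA hx).1)
        (show ((2 * (k₀ + 1) : ℤ) : ℝ) ∈ Icc (G a₀) (G a₁) from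
          ⟨by push_cast; linarith [hk₀a.2], by push_cast; linarith [hk₁a.1]⟩)
      exact hGA z (hTA hz).1 (hTA hz).2 (k₀ + 1) (by rw [hGz]; push_cast; ring)
  subst hk
  obtain ⟨z, hz, hGz⟩ := hTBc.intermediate_value hb₀ hb₁ (hG.mono fun x hx => (hTB hx).1)
    (show (2 * k₀ + 1 : ℝ) ∈ Icc (G b₀) (G b₁) from
      ⟨by linarith [hk₀b.2], by push_cast at hk₁b; linarith [hk₁b.1]⟩)
  exact hGB z (hTB hz).1 (hTB hz).2 k₀ hGz

theorem not_separates_image_union {i : Fin n} {A : Set (Fin n → ℝ)} [CompactSpace A]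
    {c₁ c₂ : Set A} (hc₁ : IsClosed c₁) (hc₂ : IsClopen c₂)
    (h₁ : ¬Separates n i ((↑) '' c₁)) (h₂ : ¬Separates n i ((↑) '' c₂)) :
    ¬Separates n i ((↑) '' (c₁ ∪ c₂)) := by
  rw [← sdiff_union_self, image_union]
  exact not_separates_union
    ((hc₁.sdiff hc₂.isOpen).isCompact.image continuous_subtype_val).isClosed
    (hc₂.isClosed.isCompact.image continuous_subtype_val).isClosed
    ((disjoint_image_iff Subtype.val_injective).2 disjoint_sdiff_left)
    (fun h => h₁ (h.mono (image_mono sdiff_subset))) h₂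

theorem exists_isClopen_mem_not_separates {i : Fin n} {A : Set (Fin n → ℝ)} [CompactSpace A]
    (h : ∀ S ⊆ A, IsCompact S → IsConnected S → ¬Separates n i S) (x : A) :
    ∃ c : Set A, IsClopen c ∧ x ∈ c ∧ ¬Separates n i ((↑) '' c) := by
  set C : Set (Fin n → ℝ) := (↑) '' connectedComponent x
  have hC : IsCompact C := isClosed_connectedComponent.isCompact.image continuous_subtype_val
  obtain ⟨T, hTC, hT, hTc, hT₀, hT₁⟩ := (not_not.1 (h C (Subtype.coe_image_subset _ _) hC
    (isConnected_connectedComponent.image _ continuous_subtype_val.continuousOn)))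
    |>.exists_isCompact_isPreconnected hC.isClosed
  obtain ⟨c, hc, hxc, hTc'⟩ := exists_isClopen_mem_disjoint_of_disjoint_connectedComponent
    (hT.isClosed.preimage continuous_subtype_val)
    (disjoint_left.2 fun y hyT hyC => (hTC hyT).2 (mem_image_of_mem _ hyC))
  refine ⟨c, hc, hxc, fun hsep => hsep ⟨T, fun y hy => ⟨(hTC hy).1, ?_⟩, hTc, hT₀, hT₁⟩⟩
  rintro ⟨y, hyc, rfl⟩
  exact hTc'.notMem_of_mem_left hy hyc

end UnitCube

theorem stmt7_general {n : ℕ} (i : Fin n) (A : Set (Fin n → ℝ))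
    (hc : IsCompact A) (hsep : Separates n i A) :
    ∃ S ⊆ A, IsCompact S ∧ IsConnected S ∧ Separates n i S := by
  by_contra! h
  have : CompactSpace A := isCompact_iff_compactSpace.1 hc
  obtain ⟨c, hcuniv, -, hc'⟩ :
      ∃ c : Set A, univ ⊆ c ∧ IsClopen c ∧ ¬Separates n i ((↑) '' c) := by
    refine isCompact_univ.induction_on
      ⟨∅, subset_rfl, isClopen_empty, by simpa using not_separates_empty i⟩
      (fun s t hst ⟨c, htc, hct⟩ => ⟨c, hst.trans htc, hct⟩)
      (fun s t ⟨c₁, hsc, hc₁, h₁⟩ ⟨c₂, htc, hc₂, h₂⟩ =>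
        ⟨c₁ ∪ c₂, union_subset_union hsc htc, hc₁.union hc₂,
          not_separates_image_union hc₁.isClosed hc₂ h₁ h₂⟩)
      fun x _ => ?_
    obtain ⟨c, hcl, hxc, hcx⟩ := exists_isClopen_mem_not_separates h x
    exact ⟨c, nhdsWithin_le_nhds (hcl.isOpen.mem_nhds hxc), c, subset_rfl, hcl, hcx⟩
  rw [univ_subset_iff.1 hcuniv, image_univ, Subtype.range_coe] at hc'
  exact hc' hsep

theorem stmt7 {n : ℕ} (i : Fin n) (A : Set (Fin n → ℝ)) (hA : A ⊆ unitCube n)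
    (hc : IsCompact A) (hsep : Separates n i A) :
    ∃ S ⊆ A, IsCompact S ∧ IsConnected S ∧ Separates n i S :=
  stmt7_general i A hc hsep
end

section
/- Let n ≥ 1, i ∈ {1,…,n}, and let A₁, A₂ ⊆ [0,1]^n be disjoint compact subsets, neither of which separates the i-th opposite faces of [0,1]^n. Then A₁ ∪ A₂ does not separate the i-th opposite faces of [0,1]^n. -/
/-!
Suppose `A = A₁ ∪ A₂` separates the faces `F₀` and `F₁`. Then the cube minus `A` is covered by two
disjoint open sets (unions of its components), `U` containing `F₀ \ A` and `V` containing `F₁ \ A`.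
Let `λ` be an Urysohn function, `0` on `A₁` and `1` on `A₂`. The map to the circle `ℝ / 2ℤ` that
is `λ` off `V` and `-λ` on `V` is continuous, because `λ ≡ -λ (mod 2)` on `A`; since the cube is
simply connected it lifts to a real function `g`. Then `g - λ` is even-integer valued off `V` and
`g + λ` off `U`, so `g - λ` is constant on `F₀` and `g + λ` on `F₁`. Along a connected set from
`F₀` to `F₁` avoiding `A₂`, the function equal to `g + λ` on `V` and to `g - λ` elsewhere is
continuous and even-integer valued, so the two constants agree; along one avoiding `A₁` the same
holds for `g + λ - 2` on `V`, so they differ by `2`.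
-/

open Set Topology AddSubgroup

section General

variable {X : Type*} [TopologicalSpace X]

def ConnectsIn (W F₀ F₁ : Set X) : Prop :=
  ∃ S ⊆ W, IsPreconnected S ∧ (S ∩ F₀).Nonempty ∧ (S ∩ F₁).Nonempty

theorem IsOpen.setOf_connectedComponentIn [LocallyConnectedSpace X] {W : Set X} (hW : IsOpen W)
    (P : Set X → Prop) : IsOpen {x | x ∈ W ∧ P (connectedComponentIn W x)} := by
  rw [isOpen_iff_mem_nhds]
  rintro x ⟨hxW, hPx⟩
  filter_upwards [hW.connectedComponentIn.mem_nhds (mem_connectedComponentIn hxW)] with y hy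
  exact ⟨connectedComponentIn_subset W x hy, connectedComponentIn_eq hy ▸ hPx⟩

theorem exists_isOpen_split_of_not_connectsIn [LocallyConnectedSpace X] {W F₀ F₁ : Set X}
    (hW : IsOpen W) (h : ¬ ConnectsIn W F₀ F₁) :
    ∃ U V : Set X, IsOpen U ∧ IsOpen V ∧ Disjoint U V ∧ W ⊆ U ∪ V ∧
      Disjoint V F₀ ∧ Disjoint U F₁ := by
  refine ⟨{x | x ∈ W ∧ (connectedComponentIn W x ∩ F₀).Nonempty},
    {x | x ∈ W ∧ ¬(connectedComponentIn W x ∩ F₀).Nonempty},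
    hW.setOf_connectedComponentIn fun C ↦ (C ∩ F₀).Nonempty,
    hW.setOf_connectedComponentIn fun C ↦ ¬(C ∩ F₀).Nonempty,
    disjoint_left.2 fun x hU hV ↦ hV.2 hU.2, fun x hx ↦ ?_,
    disjoint_left.2 fun x hV hF ↦ hV.2 ⟨x, mem_connectedComponentIn hV.1, hF⟩,
    disjoint_left.2 fun x hU hF ↦ h ⟨_, connectedComponentIn_subset W x,
      isPreconnected_connectedComponentIn, hU.2, x, mem_connectedComponentIn hU.1, hF⟩⟩
  by_cases hx₀ : (connectedComponentIn W x ∩ F₀).Nonempty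
  exacts [Or.inl ⟨hx, hx₀⟩, Or.inr ⟨hx, hx₀⟩]

theorem isPreconnected_preimage_val_iff {s t : Set X} (ht : t ⊆ s) :
    IsPreconnected (((↑) : s → X) ⁻¹' t) ↔ IsPreconnected t := by
  rw [← IsInducing.subtypeVal.isPreconnected_image, Subtype.image_preimage_coe,
    inter_eq_right.2 ht]

theorem connectsIn_preimage_val_iff {s W F₀ F₁ : Set X} (hW : W ⊆ s) :
    ConnectsIn (((↑) : s → X) ⁻¹' W) ((↑) ⁻¹' F₀) ((↑) ⁻¹' F₁) ↔ ConnectsIn W F₀ F₁ := by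
  constructor
  · rintro ⟨S, hSW, hS, ⟨a, haS, haF⟩, ⟨b, hbS, hbF⟩⟩
    exact ⟨(↑) '' S, image_subset_iff.2 hSW, hS.image _ continuous_subtype_val.continuousOn,
      ⟨a, mem_image_of_mem _ haS, haF⟩, ⟨b, mem_image_of_mem _ hbS, hbF⟩⟩
  · rintro ⟨S, hSW, hS, ⟨a, haS, haF⟩, ⟨b, hbS, hbF⟩⟩
    exact ⟨((↑) : s → X) ⁻¹' S, preimage_mono hSW,
      (isPreconnected_preimage_val_iff (hSW.trans hW)).2 hS,
      ⟨⟨a, hW (hSW haS)⟩, haS, haF⟩, ⟨⟨b, hW (hSW hbS)⟩, hbS, hbF⟩⟩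

theorem isDiscrete_zmultiples (p : ℝ) : IsDiscrete (zmultiples p : Set ℝ) :=
  isDiscrete_iff_discreteTopology.2 (inferInstanceAs (DiscreteTopology (zmultiples p)))

theorem frontier_subset_compl_union {U V : Set X} (hU : IsOpen U) (hV : IsOpen V)
    (hUV : Disjoint U V) : frontier V ⊆ (U ∪ V)ᶜ := by
  intro x hx hxUV
  rcases hxUV with hxU | hxV
  · exact disjoint_left.1 (hUV.closure_right hU) hxU (frontier_subset_closure hx)
  · exact (hV.frontier_eq ▸ hx).2 hxV

theorem exists_continuous_lift_addCircle [SimplyConnectedSpace X] [LocallyPathConnectedSpace X]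
    (p : ℝ) {f : X → AddCircle p} (hf : Continuous f) :
    ∃ g : X → ℝ, Continuous g ∧ ∀ x, (g x : AddCircle p) = f x := by
  obtain ⟨x₀⟩ : Nonempty X := inferInstance
  obtain ⟨e₀, he₀⟩ := QuotientAddGroup.mk_surjective (f x₀)
  obtain ⟨g, ⟨-, hg⟩, -⟩ :=
    (AddCircle.isCoveringMap_coe p).existsUnique_continuousMap_lifts ⟨f, hf⟩ x₀ e₀ he₀
  exact ⟨g, g.continuous, congrFun hg⟩

theorem exists_winding_pair [SimplyConnectedSpace X] [LocallyPathConnectedSpace X] [NormalSpace X]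
    {U V A₁ A₂ : Set X} (hU : IsOpen U) (hV : IsOpen V) (hUV : Disjoint U V)
    (hA₁ : IsClosed A₁) (hA₂ : IsClosed A₂) (hA : Disjoint A₁ A₂) (hcover : (U ∪ V)ᶜ ⊆ A₁ ∪ A₂) :
    ∃ h₀ h₁ : X → ℝ, Continuous h₀ ∧ Continuous h₁ ∧
      MapsTo h₀ Vᶜ (zmultiples (2 : ℝ)) ∧ MapsTo h₁ Uᶜ (zmultiples (2 : ℝ)) ∧
      (∀ x ∈ A₁, h₁ x = h₀ x) ∧ ∀ x ∈ A₂, h₁ x = h₀ x + 2 := by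
  classical
  obtain ⟨l, hl₁, hl₂, -⟩ := exists_continuous_zero_one_of_isClosed hA₁ hA₂ hA
  have hlA : ∀ x ∈ A₁ ∪ A₂, (↑(-l x) : AddCircle (2 : ℝ)) = ↑(l x) := by
    rintro x (hx | hx)
    · simp [hl₁ hx]
    · rw [QuotientAddGroup.eq_iff_sub_mem, hl₂ hx]
      exact ⟨-1, by norm_num⟩
  set f : X → AddCircle (2 : ℝ) := fun x ↦ if x ∈ V then ↑(-l x) else ↑(l x)
  have hf : Continuous f := Continuous.if
    (fun x hx ↦ hlA x (hcover (frontier_subset_compl_union hU hV hUV hx))) (by fun_prop)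
    (by fun_prop)
  obtain ⟨g, hg, hgf⟩ := exists_continuous_lift_addCircle 2 hf
  have hg_off_V : ∀ x ∉ V, (g x : AddCircle (2 : ℝ)) = ↑(l x) := fun x hx ↦
    (hgf x).trans (if_neg hx)
  have hg_off_U : ∀ x ∉ U, (g x : AddCircle (2 : ℝ)) = ↑(-l x) := fun x hx ↦ by
    by_cases hxV : x ∈ V
    · exact (hgf x).trans (if_pos hxV)
    · rw [hg_off_V x hxV, hlA x (hcover (by simp [hx, hxV]))]
  refine ⟨g - l, g + l, hg.sub l.continuous, hg.add l.continuous,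
    fun x hx ↦ QuotientAddGroup.eq_iff_sub_mem.1 (hg_off_V x hx), fun x hx ↦ ?_,
    fun x hx ↦ by simp [hl₁ hx], fun x hx ↦ ?_⟩
  · simpa using QuotientAddGroup.eq_iff_sub_mem.1 (hg_off_U x hx)
  · simp only [Pi.add_apply, Pi.sub_apply, hl₂ hx, Pi.one_apply]
    ring

theorem eq_sub_of_isPreconnected {p k : ℝ} {U V S : Set X} {h₀ h₁ : X → ℝ} (hU : IsOpen U)
    (hV : IsOpen V) (hUV : Disjoint U V) (h₀c : Continuous h₀) (h₁c : Continuous h₁)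
    (h₀m : MapsTo h₀ Vᶜ (zmultiples p)) (h₁m : MapsTo h₁ Uᶜ (zmultiples p))
    (hk : k ∈ zmultiples p) (hS : IsPreconnected S) (hSk : ∀ x ∈ S \ (U ∪ V), h₁ x = h₀ x + k)
    {x y : X} (hx : x ∈ S) (hxV : x ∉ V) (hy : y ∈ S) (hyU : y ∉ U) : h₀ x = h₁ y - k := by
  classical
  have hc : ContinuousOn (fun z ↦ if z ∈ V then h₁ z - k else h₀ z) S :=
    ContinuousOn.if (fun z hz ↦ by
        rw [hSk z ⟨hz.1, frontier_subset_compl_union hU hV hUV hz.2⟩, add_sub_cancel_right])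
      (h₁c.sub continuous_const).continuousOn h₀c.continuousOn
  have hmaps : MapsTo (fun z ↦ if z ∈ V then h₁ z - k else h₀ z) S (zmultiples p) := by
    intro z _
    by_cases hzV : z ∈ V
    · simpa [hzV] using sub_mem (h₁m (disjoint_right.1 hUV hzV)) hk
    · simpa [hzV] using h₀m hzV
  have hxy := hS.constant_of_mapsTo (isDiscrete_zmultiples _) hc hmaps hx hy
  by_cases hyV : y ∈ V
  · simpa [hxV, hyV] using hxy
  · simpa [hxV, hyV, hSk y ⟨hy, by simp [hyU, hyV]⟩] using hxy

theorem ConnectsIn.compl_union [SimplyConnectedSpace X] [LocallyPathConnectedSpace X]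
    [NormalSpace X] {A₁ A₂ F₀ F₁ : Set X} (hA₁ : IsClosed A₁) (hA₂ : IsClosed A₂)
    (hA : Disjoint A₁ A₂) (hF₀ : IsPreconnected F₀) (hF₁ : IsPreconnected F₁)
    (h₁ : ConnectsIn A₁ᶜ F₀ F₁) (h₂ : ConnectsIn A₂ᶜ F₀ F₁) : ConnectsIn (A₁ ∪ A₂)ᶜ F₀ F₁ := by
  by_contra h
  obtain ⟨U, V, hU, hV, hUV, hcover, hVF₀, hUF₁⟩ :=
    exists_isOpen_split_of_not_connectsIn (hA₁.union hA₂).isOpen_compl h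
  have hcover' : (U ∪ V)ᶜ ⊆ A₁ ∪ A₂ := compl_subset_comm.1 hcover
  obtain ⟨g₀, g₁, hg₀, hg₁, hg₀m, hg₁m, hgA₁, hgA₂⟩ :=
    exists_winding_pair hU hV hUV hA₁ hA₂ hA hcover'
  obtain ⟨S₁, hS₁A, hS₁, ⟨x₀, hx₀S, hx₀F⟩, ⟨x₁, hx₁S, hx₁F⟩⟩ := h₁
  obtain ⟨S₂, hS₂A, hS₂, ⟨y₀, hy₀S, hy₀F⟩, ⟨y₁, hy₁S, hy₁F⟩⟩ := h₂
  have hx : g₀ x₀ = g₁ x₁ - 2 :=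
    eq_sub_of_isPreconnected hU hV hUV hg₀ hg₁ hg₀m hg₁m (mem_zmultiples 2) hS₁
      (fun z hz ↦ hgA₂ z ((hcover' hz.2).resolve_left (hS₁A hz.1)))
      hx₀S (disjoint_right.1 hVF₀ hx₀F) hx₁S (disjoint_right.1 hUF₁ hx₁F)
  have hy : g₀ y₀ = g₁ y₁ - 0 :=
    eq_sub_of_isPreconnected hU hV hUV hg₀ hg₁ hg₀m hg₁m (zero_mem _) hS₂
      (fun z hz ↦ by rw [add_zero, hgA₁ z ((hcover' hz.2).resolve_right (hS₂A hz.1))])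
      hy₀S (disjoint_right.1 hVF₀ hy₀F) hy₁S (disjoint_right.1 hUF₁ hy₁F)
  have hF₀' : g₀ x₀ = g₀ y₀ :=
    hF₀.constant_of_mapsTo (isDiscrete_zmultiples _) hg₀.continuousOn
      (fun z hz ↦ hg₀m (disjoint_right.1 hVF₀ hz)) hx₀F hy₀F
  have hF₁' : g₁ x₁ = g₁ y₁ :=
    hF₁.constant_of_mapsTo (isDiscrete_zmultiples _) hg₁.continuousOn
      (fun z hz ↦ hg₁m (disjoint_right.1 hUF₁ hz)) hx₁F hy₁F
  linarith

end General

section Cube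

variable {n : ℕ}

instance : ContractibleSpace (unitCube n) :=
  (convex_Icc 0 1).contractibleSpace ⟨0, left_mem_Icc.2 zero_le_one⟩

instance : LocallyPathConnectedSpace (unitCube n) :=
  (convex_Icc 0 1).locallyPathConnectedSpace

theorem convex_face (i : Fin n) (v : ℝ) : Convex ℝ (face n i v) := by
  have : Convex ℝ {x : Fin n → ℝ | x i = v} :=
    (convex_singleton v).linear_preimage (LinearMap.proj (R := ℝ) (φ := fun _ : Fin n ↦ ℝ) i)
  exact (convex_Icc 0 1).inter this

theorem isPreconnected_preimage_face (i : Fin n) (v : ℝ) :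
    IsPreconnected (((↑) : unitCube n → Fin n → ℝ) ⁻¹' face n i v) :=
  (isPreconnected_preimage_val_iff fun _ hx ↦ hx.1).2 (convex_face i v).isPreconnected

theorem connects_diff_iff (i : Fin n) (A : Set (Fin n → ℝ)) :
    Connects n i (unitCube n \ A) ↔ ConnectsIn (((↑) : unitCube n → Fin n → ℝ) ⁻¹' A)ᶜ
      ((↑) ⁻¹' face n i 0) ((↑) ⁻¹' face n i 1) := by
  have : ((↑) : unitCube n → Fin n → ℝ) ⁻¹' (unitCube n \ A) = ((↑) ⁻¹' A)ᶜ := by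
    ext x
    simp
  rw [← this]
  exact (connectsIn_preimage_val_iff sdiff_subset).symm

end Cube

theorem stmt8_general {n : ℕ} (i : Fin n) (A₁ A₂ : Set (Fin n → ℝ))
    (hc₁ : IsCompact A₁) (hc₂ : IsCompact A₂) (hdisj : Disjoint A₁ A₂)
    (hn₁ : ¬ Separates n i A₁) (hn₂ : ¬ Separates n i A₂) :
    ¬ Separates n i (A₁ ∪ A₂) := by
  simp only [Separates, not_not, connects_diff_iff] at hn₁ hn₂ ⊢
  rw [preimage_union]
  exact hn₁.compl_union (hc₁.isClosed.preimage continuous_subtype_val)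
    (hc₂.isClosed.preimage continuous_subtype_val) (hdisj.preimage _)
    (isPreconnected_preimage_face i 0) (isPreconnected_preimage_face i 1) hn₂

theorem stmt8 {n : ℕ} (i : Fin n) (A₁ A₂ : Set (Fin n → ℝ))
    (h₁ : A₁ ⊆ unitCube n) (h₂ : A₂ ⊆ unitCube n)
    (hc₁ : IsCompact A₁) (hc₂ : IsCompact A₂) (hdisj : Disjoint A₁ A₂)
    (hn₁ : ¬ Separates n i A₁) (hn₂ : ¬ Separates n i A₂) :
    ¬ Separates n i (A₁ ∪ A₂) :=
  stmt8_general i A₁ A₂ hc₁ hc₂ hdisj hn₁ hn₂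
end

section
/- Let n ≥ 1, i ∈ {1,…,n}, and (A_k) a sequence of compact subsets of [0,1]^n converging in the Hausdorff metric to A ⊆ [0,1]^n. If every A_k connects the i-th opposite faces of [0,1]^n, then A connects them too; likewise, if every A_k separates the i-th opposite faces, then A separates them. -/
open Set Metric EMetric Filter

/-- If a compact subset of the cube does not connect the `i`-th opposite faces, it splits
into two disjoint compact pieces, one avoiding the `1`-face, the other the `0`-face. -/
lemma exists_split {n : ℕ} (i : Fin n) {B : Set (Fin n → ℝ)}
    (hBc : IsCompact B) (hnc : ¬ Connects n i B) (hBsub : B ⊆ unitCube n) :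
    ∃ B0 B1 : Set (Fin n → ℝ), IsCompact B0 ∧ IsCompact B1 ∧ B = B0 ∪ B1 ∧
      Disjoint B0 B1 ∧ (∀ x ∈ B0, x i ≠ 1) ∧ (∀ x ∈ B1, x i ≠ 0) := by
  haveI : CompactSpace B := isCompact_iff_compactSpace.mp hBc
  set F0 : Set B := {x : B | (x : Fin n → ℝ) i = 0} with hF0
  set F1 : Set B := {x : B | (x : Fin n → ℝ) i = 1} with hF1
  have hF0c : IsClosed F0 := isClosed_eq (((continuous_apply i).comp continuous_subtype_val)) continuous_const
  have hF1c : IsClosed F1 := isClosed_eq (((continuous_apply i).comp continuous_subtype_val)) continuous_const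
  -- for each point of F0, a clopen neighborhood avoiding F1
  have key : ∀ x : B, x ∈ F0 → ∃ Z : Set B, IsClopen Z ∧ x ∈ Z ∧ Z ∩ F1 = ∅ := by
    intro x hx
    have hcomp : connectedComponent x ∩ F1 = ∅ := by
      by_contra h
      obtain ⟨y, hyC, hy1⟩ := Set.nonempty_iff_ne_empty.mpr h
      exact hnc ⟨Subtype.val '' connectedComponent x, by rintro _ ⟨z, _, rfl⟩; exact z.2,
        isPreconnected_connectedComponent.image _ continuous_subtype_val.continuousOn,
        ⟨(x : Fin n → ℝ), ⟨x, mem_connectedComponent, rfl⟩, hBsub x.2, hx⟩,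
        ⟨(y : Fin n → ℝ), ⟨y, hyC, rfl⟩, hBsub y.2, hy1⟩⟩
    rw [connectedComponent_eq_iInter_isClopen] at hcomp
    haveI : Nonempty {s : Set B // IsClopen s ∧ x ∈ s} :=
      ⟨⟨Set.univ, isClopen_univ, Set.mem_univ x⟩⟩
    have hdir : Directed (· ⊇ ·) fun Z : {s : Set B // IsClopen s ∧ x ∈ s} => (Z : Set B) := by
      rintro ⟨Z1, hZ1, hxZ1⟩ ⟨Z2, hZ2, hxZ2⟩
      exact ⟨⟨Z1 ∩ Z2, hZ1.inter hZ2, ⟨hxZ1, hxZ2⟩⟩, Set.inter_subset_left,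
        Set.inter_subset_right⟩
    have := (hF1c.isCompact).elim_directed_family_closed
      (fun Z : {s : Set B // IsClopen s ∧ x ∈ s} => (Z : Set B))
      (fun Z => Z.2.1.1) (by rw [Set.inter_comm] at hcomp; exact hcomp) hdir
    obtain ⟨⟨Z, hZclo, hxZ⟩, hZ⟩ := this
    exact ⟨Z, hZclo, hxZ, by rw [Set.inter_comm]; exact hZ⟩
  choose! Z hZclo hZmem hZF1 using key
  have hcover : F0 ⊆ ⋃ x ∈ F0, Z x := fun x hx =>
    Set.mem_biUnion hx (hZmem x hx)
  obtain ⟨t, htsub, htfin, htcov⟩ := (hF0c.isCompact).elim_finite_subcover_image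
    (fun x hx => (hZclo x hx).isOpen) hcover
  set Zt : Set B := ⋃ x ∈ t, Z x with hZt
  have hZtclo : IsClopen Zt := htfin.isClopen_biUnion fun x hx => hZclo x (htsub hx)
  have hZtF1 : Zt ∩ F1 = ∅ := by
    apply Set.eq_empty_iff_forall_notMem.mpr
    rintro y ⟨hyZ, hyF1⟩
    obtain ⟨x, hxt, hyx⟩ := Set.mem_iUnion₂.mp hyZ
    exact Set.eq_empty_iff_forall_notMem.mp (hZF1 x (htsub hxt)) y ⟨hyx, hyF1⟩
  refine ⟨Subtype.val '' Zt, Subtype.val '' Ztᶜ, ?_, ?_, ?_, ?_, ?_, ?_⟩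
  · exact (hZtclo.isClosed.isCompact).image continuous_subtype_val
  · exact (hZtclo.compl.isClosed.isCompact).image continuous_subtype_val
  · rw [← Set.image_union, Set.union_compl_self, Set.image_univ, Subtype.range_coe]
  · exact Set.disjoint_image_of_injective Subtype.val_injective disjoint_compl_right
  · rintro _ ⟨z, hz, rfl⟩ h1
    exact Set.eq_empty_iff_forall_notMem.mp hZtF1 z ⟨hz, h1⟩
  · rintro _ ⟨z, hz, rfl⟩ h0
    exact hz (htcov h0)

lemma cube_connects (n : ℕ) (i : Fin n) : Connects n i (unitCube n) := by
  refine ⟨unitCube n, Set.Subset.rfl, (convex_Icc (0 : Fin n → ℝ) 1).isPreconnected, ?_, ?_⟩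
  · refine ⟨0, ?_, ?_, rfl⟩
    · exact Set.left_mem_Icc.mpr zero_le_one
    · exact Set.left_mem_Icc.mpr zero_le_one
  · refine ⟨fun j => if j = i then (1:ℝ) else 0, ?_, ?_, by simp⟩
    · constructor
      · intro j; dsimp; split <;> norm_num
      · intro j; dsimp; split <;> norm_num
    · constructor
      · intro j; dsimp; split <;> norm_num
      · intro j; dsimp; split <;> norm_num

theorem stmt9 {n : ℕ} (i : Fin n) (A : ℕ → Set (Fin n → ℝ)) (B : Set (Fin n → ℝ))
    (hAsub : ∀ k, A k ⊆ unitCube n) (hAc : ∀ k, IsCompact (A k))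
    (hBsub : B ⊆ unitCube n) (hBc : IsCompact B)
    (hconv : Filter.Tendsto (fun k => EMetric.hausdorffEdist (A k) B)
      Filter.atTop (nhds 0)) :
    ((∀ k, Connects n i (A k)) → Connects n i B) ∧
      ((∀ k, Separates n i (A k)) → Separates n i B) := by
  have hsmall : ∀ ε : ℝ, 0 < ε → ∃ k, EMetric.hausdorffEdist (A k) B < ENNReal.ofReal ε := by
    intro ε hε
    have : ∀ᶠ k in Filter.atTop, EMetric.hausdorffEdist (A k) B < ENNReal.ofReal ε :=
      hconv.eventually_lt_const (ENNReal.ofReal_pos.mpr hε)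
    exact this.exists
  constructor
  · -- Connects part
    intro hall
    by_contra hnc
    obtain ⟨B0, B1, hB0c, hB1c, hBu, hBd, hB0f, hB1f⟩ := exists_split i hBc hnc hBsub
    have hB0sub : B0 ⊆ B := hBu ▸ Set.subset_union_left
    have hB1sub : B1 ⊆ B := hBu ▸ Set.subset_union_right
    -- B0 stays away from the 1-face, B1 from the 0-face
    have hη1 : ∃ η > (0:ℝ), ∀ x ∈ B0, x i ≤ 1 - η := by
      rcases B0.eq_empty_or_nonempty with h | h
      · exact ⟨1, one_pos, by simp [h]⟩
      · obtain ⟨b0, hb0, hmax⟩ := hB0c.exists_isMaxOn h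
          ((continuous_apply i).continuousOn)
        exact ⟨1 - b0 i, by
          have h1 : b0 i ≤ 1 := (hBsub (hB0sub hb0)).2 i
          have h2 : b0 i ≠ 1 := hB0f b0 hb0
          linarith [lt_of_le_of_ne h1 h2], fun x hx => by linarith [show x i ≤ b0 i from hmax hx]⟩
    have hη0 : ∃ η > (0:ℝ), ∀ x ∈ B1, η ≤ x i := by
      rcases B1.eq_empty_or_nonempty with h | h
      · exact ⟨1, one_pos, by simp [h]⟩
      · obtain ⟨b1, hb1, hmin⟩ := hB1c.exists_isMinOn h
          ((continuous_apply i).continuousOn)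
        exact ⟨b1 i, by
          have h1 : (0:ℝ) ≤ b1 i := (hBsub (hB1sub hb1)).1 i
          have h2 : b1 i ≠ 0 := hB1f b1 hb1
          exact lt_of_le_of_ne h1 (Ne.symm h2), fun x hx => hmin hx⟩
    obtain ⟨η1, hη1pos, hη1le⟩ := hη1
    obtain ⟨η0, hη0pos, hη0le⟩ := hη0
    obtain ⟨δ, hδpos, hδdisj⟩ := hBd.exists_thickenings hB0c hB1c.isClosed
    set ε : ℝ := min δ (min η0 η1) with hε
    have hεpos : 0 < ε := lt_min hδpos (lt_min hη0pos hη1pos)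
    obtain ⟨k, hk⟩ := hsmall ε hεpos
    obtain ⟨S, hSA, hSc, ⟨x0, hx0S, hx0f⟩, ⟨x1, hx1S, hx1f⟩⟩ := hall k
    have hthick : S ⊆ thickening ε B0 ∪ thickening ε B1 := by
      intro x hx
      have h1 : EMetric.infEdist x B < ENNReal.ofReal ε :=
        lt_of_le_of_lt (EMetric.infEdist_le_hausdorffEdist_of_mem (hSA hx)) hk
      have h2 : x ∈ thickening ε B := h1
      rwa [hBu, thickening_union] at h2
    have hdisj : Disjoint (thickening ε B0) (thickening ε B1) :=
      hδdisj.mono (thickening_mono (min_le_left _ _) _) (thickening_mono (min_le_left _ _) _)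
    rcases hSc.subset_or_subset isOpen_thickening isOpen_thickening hdisj hthick with h | h
    · -- S in thickening of B0, but S meets the 1-face
      obtain ⟨b, hbB0, hbd⟩ := mem_thickening_iff.mp (h hx1S)
      have h1 : x1 i = 1 := hx1f.2
      have h2 : b i ≤ 1 - η1 := hη1le b hbB0
      have h3 : dist (x1 i) (b i) ≤ dist x1 b := dist_le_pi_dist x1 b i
      have h4 : dist x1 b < η1 := lt_of_lt_of_le hbd (le_trans (min_le_right _ _) (min_le_right _ _))
      rw [h1, Real.dist_eq] at h3
      have : |1 - b i| < η1 := lt_of_le_of_lt h3 h4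
      rw [abs_lt] at this
      linarith [this.1, this.2]
    · -- S in thickening of B1, but S meets the 0-face
      obtain ⟨b, hbB1, hbd⟩ := mem_thickening_iff.mp (h hx0S)
      have h1 : x0 i = 0 := hx0f.2
      have h2 : η0 ≤ b i := hη0le b hbB1
      have h3 : dist (x0 i) (b i) ≤ dist x0 b := dist_le_pi_dist x0 b i
      have h4 : dist x0 b < η0 := lt_of_lt_of_le hbd (le_trans (min_le_right _ _) (min_le_left _ _))
      rw [h1, Real.dist_eq] at h3
      have : |0 - b i| < η0 := lt_of_le_of_lt h3 h4
      rw [abs_lt] at this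
      linarith [this.1, this.2]
  · -- Separates part
    intro hall hcon
    obtain ⟨S, hS, hSc, ⟨a, haS, haf⟩, ⟨b, hbS, hbf⟩⟩ := hcon
    have hAne : ∀ k, (A k).Nonempty := by
      intro k
      rcases (A k).eq_empty_or_nonempty with h | h
      · exfalso
        apply hall k
        have heq : unitCube n \ A k = unitCube n := by rw [h, Set.diff_empty]
        obtain ⟨T, hT, h1, h2, h3⟩ := cube_connects n i
        exact ⟨T, by rw [heq]; exact hT, h1, h2, h3⟩
      · exact h
    have hBne : B.Nonempty := by
      obtain ⟨k, hk⟩ := hsmall 1 one_pos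
      exact EMetric.nonempty_of_hausdorffEdist_ne_top (hAne k) (ne_top_of_lt hk)
    -- clamp map onto the cube
    set c : (Fin n → ℝ) → (Fin n → ℝ) := fun x j => min (max (x j) 0) 1 with hcdef
    have hc_cont : Continuous c := by
      apply continuous_pi
      intro j
      exact (((continuous_apply j).max continuous_const).min continuous_const)
    have hc_mem : ∀ x, c x ∈ unitCube n := by
      intro x
      constructor
      · intro j; exact le_min (le_max_right _ _) zero_le_one
      · intro j; exact min_le_right _ _
    have hc_id : ∀ x ∈ unitCube n, c x = x := by
      intro x hx
      funext j
      have h0 : (0:ℝ) ≤ x j := hx.1 j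
      have h1 : x j ≤ 1 := hx.2 j
      simp [hcdef, max_eq_left h0, min_eq_left h1]
    set W : Set (Fin n → ℝ) := (c ⁻¹' B)ᶜ with hWdef
    have hWopen : IsOpen W := (hBc.isClosed.preimage hc_cont).isOpen_compl
    have hSW : S ⊆ W := by
      intro x hx
      have hx' := hS hx
      intro hxB
      exact hx'.2 (by rwa [Set.mem_preimage, hc_id x hx'.1] at hxB)
    have haW : a ∈ W := hSW haS
    have hbW : b ∈ W := hSW hbS
    set U : Set (Fin n → ℝ) := connectedComponentIn W a with hUdef
    have hUopen : IsOpen U := hWopen.connectedComponentIn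
    have hUconn : IsConnected U := isConnected_connectedComponentIn_iff.mpr haW
    have hUpath : IsPathConnected U := hUopen.isConnected_iff_isPathConnected.mp hUconn
    have haU : a ∈ U := mem_connectedComponentIn haW
    have hbU : b ∈ U := hSc.subset_connectedComponentIn haS hSW hbS
    obtain ⟨γ, hγ⟩ := hUpath.joinedIn a haU b hbU
    set K : Set (Fin n → ℝ) := c '' (Set.range γ) with hKdef
    have hKc : IsCompact K := (isCompact_range γ.continuous).image hc_cont
    have hKB : Disjoint K B := by
      rw [Set.disjoint_left]
      rintro _ ⟨_, ⟨t, rfl⟩, rfl⟩ hmem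
      exact (connectedComponentIn_subset W a) (hγ t) hmem
    obtain ⟨δ, hδpos, hδdisj⟩ := hKB.exists_thickenings hKc hBc.isClosed
    obtain ⟨k, hk⟩ := hsmall δ hδpos
    have hAthick : A k ⊆ thickening δ B := by
      intro x hx
      exact lt_of_le_of_lt (EMetric.infEdist_le_hausdorffEdist_of_mem hx) hk
    have hKA : ∀ x ∈ K, x ∉ A k := by
      intro x hx hxA
      exact Set.disjoint_left.mp hδdisj (self_subset_thickening hδpos K hx) (hAthick hxA)
    apply hall k
    have haK : a ∈ K := by
      refine ⟨γ 0, ⟨0, rfl⟩, ?_⟩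
      rw [γ.source]
      exact hc_id a haf.1
    have hbK : b ∈ K := by
      refine ⟨γ 1, ⟨1, rfl⟩, ?_⟩
      rw [γ.target]
      exact hc_id b hbf.1
    refine ⟨K, ?_, ?_, ⟨a, haK, haf⟩, ⟨b, hbK, hbf⟩⟩
    · rintro _ ⟨y, hy, rfl⟩
      exact ⟨hc_mem y, hKA _ ⟨y, hy, rfl⟩⟩
    · exact ((isPreconnected_range γ.continuous).image _ hc_cont.continuousOn)
end

section
/- Let n ≥ 1, i ∈ {1,…,n}, and A ⊆ [0,1]^n a compact set that does not connect (resp. does not separate) the i-th opposite faces of [0,1]^n. Then there exists an open neighborhood U of A in [0,1]^n that does not connect (resp. does not separate) the i-th opposite faces either. -/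
-- basic facts
lemma isClosed_unitCube (n : ℕ) : IsClosed (unitCube n) := isClosed_Icc

lemma isClosed_face (n : ℕ) (i : Fin n) (v : ℝ) : IsClosed (face n i v) := by
  have : face n i v = unitCube n ∩ {x | x i = v} := by
    ext x; simp [face, Set.mem_setOf_eq, and_comm]
  rw [this]
  exact (isClosed_unitCube n).inter (isClosed_eq (continuous_apply i) continuous_const)

-- clopen separation in compact subtype
lemma exists_clopen_sep {n : ℕ} (i : Fin n) (A : Set (Fin n → ℝ)) (hc : IsCompact A)
    (h : ¬ Connects n i A) :
    ∃ C : Set A, IsClopen C ∧ {x : A | (x : Fin n → ℝ) ∈ face n i 0} ⊆ C ∧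
      C ∩ {x : A | (x : Fin n → ℝ) ∈ face n i 1} = ∅ := by
  haveI : CompactSpace A := isCompact_iff_compactSpace.mp hc
  set K0 : Set A := {x : A | (x : Fin n → ℝ) ∈ face n i 0} with hK0
  set K1 : Set A := {x : A | (x : Fin n → ℝ) ∈ face n i 1} with hK1
  have hK0c : IsClosed K0 := (isClosed_face n i 0).preimage continuous_subtype_val
  have hK1c : IsClosed K1 := (isClosed_face n i 1).preimage continuous_subtype_val
  -- step A: for each x in K0, a clopen containing x disjoint from K1
  have stepA : ∀ x ∈ K0, ∃ C : Set A, IsClopen C ∧ x ∈ C ∧ C ∩ K1 = ∅ := by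
    intro x hx
    have hcc : connectedComponent x ∩ K1 = ∅ := by
      by_contra hne
      obtain ⟨y, hy, hy1⟩ := Set.nonempty_iff_ne_empty.mpr hne
      exact h ⟨Subtype.val '' connectedComponent x, by rintro _ ⟨z, _, rfl⟩; exact z.2,
        isPreconnected_connectedComponent.image _ continuous_subtype_val.continuousOn,
        ⟨x, ⟨x, mem_connectedComponent, rfl⟩, hx⟩,
        ⟨y, ⟨y, hy, rfl⟩, hy1⟩⟩
    have hinter := connectedComponent_eq_iInter_isClopen x
    -- K1 ⊆ union of complements
    have hcov : K1 ⊆ ⋃ Z : {Z : Set A // IsClopen Z ∧ x ∈ Z}, (↑Z : Set A)ᶜ := by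
      intro y hy
      by_contra hyn
      simp only [Set.mem_iUnion, Set.mem_compl_iff, not_exists, not_not] at hyn
      have : y ∈ connectedComponent x := by
        rw [hinter]; exact Set.mem_iInter.mpr fun Z => hyn Z
      exact absurd hcc (Set.nonempty_iff_ne_empty.mp ⟨y, this, hy⟩)
    obtain ⟨t, ht⟩ := (hK1c.isCompact).elim_finite_subcover
      (fun Z : {Z : Set A // IsClopen Z ∧ x ∈ Z} => (↑Z : Set A)ᶜ)
      (fun Z => Z.2.1.compl.isOpen) hcov
    refine ⟨⋂ Z ∈ t, (Z : Set A), isClopen_biInter_finset fun Z _ => Z.2.1,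
      Set.mem_iInter₂.mpr fun Z _ => Z.2.2, ?_⟩
    ext y
    simp only [Set.mem_inter_iff, Set.mem_iInter, Set.mem_empty_iff_false, iff_false, not_and]
    intro hy hy1
    obtain ⟨Z, hZt, hZ⟩ := Set.mem_iUnion₂.mp (ht hy1)
    exact hZ (hy Z hZt)
  -- step B: cover K0 by finitely many such clopens
  choose! C hC using stepA
  obtain ⟨t, ht⟩ := (hK0c.isCompact).elim_finite_subcover (fun x : K0 => C ↑x)
    (fun x => (hC ↑x x.2).1.isOpen)
    (fun y hy => Set.mem_iUnion.mpr ⟨⟨y, hy⟩, (hC y hy).2.1⟩)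
  refine ⟨⋃ x ∈ t, C ↑x, isClopen_biUnion_finset fun x _ => (hC ↑x x.2).1, ht, ?_⟩
  ext y
  simp only [Set.mem_inter_iff, Set.mem_iUnion, Set.mem_empty_iff_false, iff_false, not_and]
  rintro ⟨x, hxt, hyx⟩ hy1
  exact absurd (hC ↑x x.2).2.2 (Set.nonempty_iff_ne_empty.mp ⟨y, hyx, hy1⟩)

def clampC (n : ℕ) : (Fin n → ℝ) → (Fin n → ℝ) := fun x j => max 0 (min (x j) 1)

lemma clampC_continuous (n : ℕ) : Continuous (clampC n) :=
  continuous_pi fun j => continuous_const.max ((continuous_apply j).min continuous_const)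

lemma clampC_mem (n : ℕ) (x : Fin n → ℝ) : clampC n x ∈ unitCube n := by
  refine Set.mem_Icc.mpr ⟨fun j => le_max_left _ _, fun j => ?_⟩
  exact max_le zero_le_one (min_le_right _ _)

lemma clampC_fix {n : ℕ} {x : Fin n → ℝ} (hx : x ∈ unitCube n) : clampC n x = x := by
  obtain ⟨h0, h1⟩ := Set.mem_Icc.mp hx
  funext j
  have h0j : (0:ℝ) ≤ x j := h0 j
  have h1j : x j ≤ 1 := h1 j
  simp only [clampC]
  rw [min_eq_left h1j, max_eq_right h0j]

theorem stmt10 {n : ℕ} (i : Fin n) (A : Set (Fin n → ℝ)) (hA : A ⊆ unitCube n)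
    (hc : IsCompact A) :
    (¬ Connects n i A → ∃ U, OpenInCube n U ∧ A ⊆ U ∧ ¬ Connects n i U) ∧
      (¬ Separates n i A → ∃ U, OpenInCube n U ∧ A ⊆ U ∧ ¬ Separates n i U) := by
  constructor
  · -- Part 1
    intro h
    obtain ⟨C, hCcl, hC0, hC1⟩ := exists_clopen_sep i A hc h
    haveI : CompactSpace A := isCompact_iff_compactSpace.mp hc
    set A0 : Set (Fin n → ℝ) := Subtype.val '' C with hA0
    set A1 : Set (Fin n → ℝ) := Subtype.val '' Cᶜ with hA1
    have hA0c : IsCompact A0 := hCcl.isClosed.isCompact.image continuous_subtype_val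
    have hA1c : IsCompact A1 := hCcl.compl.isClosed.isCompact.image continuous_subtype_val
    have hdisj : Disjoint A0 A1 :=
      (Set.disjoint_image_iff Subtype.val_injective).mpr disjoint_compl_right
    have hunion : A0 ∪ A1 = A := by
      rw [hA0, hA1, ← Set.image_union, Set.union_compl_self, Subtype.coe_image_univ]
    have hA0F1 : Disjoint A0 (face n i 1) := by
      rw [Set.disjoint_left]
      rintro _ ⟨x, hxC, rfl⟩ hxF
      have : x ∈ C ∩ {x : A | (x : Fin n → ℝ) ∈ face n i 1} := ⟨hxC, hxF⟩
      rw [hC1] at this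
      exact this
    have hA1F0 : Disjoint A1 (face n i 0) := by
      rw [Set.disjoint_left]
      rintro _ ⟨x, hxC, rfl⟩ hxF
      exact hxC (hC0 hxF)
    obtain ⟨δ1, hδ1, hd1⟩ := hdisj.exists_thickenings hA0c hA1c.isClosed
    obtain ⟨δ2, hδ2, hd2⟩ := hA0F1.exists_thickenings hA0c (isClosed_face n i 1)
    obtain ⟨δ3, hδ3, hd3⟩ := hA1F0.exists_thickenings hA1c (isClosed_face n i 0)
    set ε := min δ1 (min δ2 δ3) with hε
    have hεpos : 0 < ε := lt_min hδ1 (lt_min hδ2 hδ3)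
    set T0 := Metric.thickening ε A0 with hT0
    set T1 := Metric.thickening ε A1 with hT1
    refine ⟨(T0 ∪ T1) ∩ unitCube n, ⟨T0 ∪ T1,
      Metric.isOpen_thickening.union Metric.isOpen_thickening, rfl⟩, ?_, ?_⟩
    · intro x hx
      refine ⟨?_, hA hx⟩
      rw [← hunion] at hx
      rcases hx with hx | hx
      · exact Or.inl (Metric.self_subset_thickening hεpos _ hx)
      · exact Or.inr (Metric.self_subset_thickening hεpos _ hx)
    · rintro ⟨S, hSU, hSp, ⟨p, hpS, hp0⟩, ⟨q, hqS, hq1⟩⟩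
      have hsub : S ⊆ T0 ∪ T1 := fun x hx => (hSU hx).1
      have hdisjT : Disjoint T0 T1 :=
        hd1.mono (Metric.thickening_mono (min_le_left _ _) _)
          (Metric.thickening_mono (min_le_left _ _) _)
      have hpT0 : p ∈ T0 := by
        rcases hsub hpS with hp | hp
        · exact hp
        · exfalso
          have h1 : p ∈ Metric.thickening δ3 A1 :=
            Metric.thickening_mono (hε ▸ (min_le_right δ1 _).trans (min_le_right δ2 δ3)) _ hp
          have h2 : p ∈ Metric.thickening δ3 (face n i 0) :=
            Metric.self_subset_thickening hδ3 _ hp0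
          exact Set.disjoint_left.mp hd3 h1 h2
      have hST0 : S ⊆ T0 :=
        hSp.subset_left_of_subset_union Metric.isOpen_thickening Metric.isOpen_thickening
          hdisjT hsub ⟨p, hpS, hpT0⟩
      have h1 : q ∈ Metric.thickening δ2 A0 :=
        Metric.thickening_mono (hε ▸ (min_le_right δ1 _).trans (min_le_left δ2 δ3)) _ (hST0 hqS)
      have h2 : q ∈ Metric.thickening δ2 (face n i 1) :=
        Metric.self_subset_thickening hδ2 _ hq1
      exact Set.disjoint_left.mp hd2 h1 h2
  · -- Part 2
    intro hns
    have hCon : Connects n i (unitCube n \ A) := not_not.mp hns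
    obtain ⟨S, hS, hSp, ⟨p, hpS, hp0⟩, ⟨q, hqS, hq1⟩⟩ := hCon
    set Ω := (clampC n) ⁻¹' Aᶜ with hΩdef
    have hΩ : IsOpen Ω := hc.isClosed.isOpen_compl.preimage (clampC_continuous n)
    have hSΩ : S ⊆ Ω := by
      intro x hx
      have hx' := hS hx
      simp only [hΩdef, Set.mem_preimage, Set.mem_compl_iff, clampC_fix hx'.1]
      exact hx'.2
    have hq' : q ∈ connectedComponentIn Ω p :=
      hSp.subset_connectedComponentIn hpS hSΩ hqS
    have hpΩ : p ∈ Ω := hSΩ hpS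
    have hopen : IsOpen (connectedComponentIn Ω p) := hΩ.connectedComponentIn
    have hconn : IsConnected (connectedComponentIn Ω p) :=
      isConnected_connectedComponentIn_iff.mpr hpΩ
    have hpath : IsPathConnected (connectedComponentIn Ω p) :=
      hopen.isConnected_iff_isPathConnected.mp hconn
    have hjoin : JoinedIn Ω p q :=
      (hpath.joinedIn p (mem_connectedComponentIn hpΩ) q hq').mono
        (connectedComponentIn_subset _ _)
    obtain ⟨γ, hγ⟩ := hjoin
    set K := Set.range (fun t => clampC n (γ t)) with hK
    have hKc : IsCompact K := isCompact_range ((clampC_continuous n).comp γ.continuous)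
    have hKpre : IsPreconnected K :=
      isPreconnected_range ((clampC_continuous n).comp γ.continuous)
    have hKsub : K ⊆ unitCube n \ A := by
      rintro _ ⟨t, rfl⟩
      exact ⟨clampC_mem n _, hγ t⟩
    have hpK : p ∈ K := ⟨0, by simp [Path.source, clampC_fix hp0.1]⟩
    have hqK : q ∈ K := ⟨1, by simp [Path.target, clampC_fix hq1.1]⟩
    refine ⟨Kᶜ ∩ unitCube n, ⟨Kᶜ, hKc.isClosed.isOpen_compl, rfl⟩, ?_, ?_⟩
    · exact fun x hx => ⟨fun hxK => (hKsub hxK).2 hx, hA hx⟩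
    · intro hsep
      exact hsep ⟨K, fun x hx => ⟨(hKsub hx).1, fun hU => hU.1 hx⟩, hKpre,
        ⟨p, hpK, hp0⟩, ⟨q, hqK, hq1⟩⟩
end

section
/- Let γ₁, γ₂ : [0,1] → [0,1]² be arcs such that γ₁ joins a point of the face {x : x₁ = 0} to a point of the face {x : x₁ = 1}, and γ₂ joins a point of {x : x₂ = 0} to a point of {x : x₂ = 1}. Then γ₁ and γ₂ intersect, i.e., γ₁([0,1]) ∩ γ₂([0,1]) ≠ ∅. -/
open Set Real

namespace Complex

theorem exists_continuous_exp_eq {X : Type*} [TopologicalSpace X] [SimplyConnectedSpace X]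
    [LocallyPathConnectedSpace X] {g : X → ℂ} (hg : Continuous g) (hg₀ : ∀ x, g x ≠ 0) :
    ∃ f : X → ℂ, Continuous f ∧ ∀ x, exp (f x) = g x := by
  obtain ⟨x₀⟩ := (inferInstance : Nonempty X)
  obtain ⟨F, ⟨-, hF⟩, -⟩ := isCoveringMapOn_exp.existsUnique_continuousMap_lifts ⟨g, hg⟩
    (exp_log (hg₀ x₀)) hg₀
  exact ⟨F, F.continuous, congrFun hF⟩

theorem sub_eq_sub_of_exp_eq {X : Type*} [TopologicalSpace X] [PreconnectedSpace X]
    {f g : X → ℂ} (hf : Continuous f) (hg : Continuous g) (h : ∀ x, exp (f x) = exp (g x))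
    (x y : X) : f x - g x = f y - g y := by
  have hmem (x : X) : f x - g x ∈ AddSubgroup.zmultiples (2 * π * I) := by
    obtain ⟨n, hn⟩ := exp_eq_exp_iff_exists_int.1 (h x)
    exact ⟨n, by simp [hn]⟩
  have hd : Continuous fun x ↦ (⟨f x - g x, hmem x⟩ : AddSubgroup.zmultiples (2 * π * I)) :=
    (hf.sub hg).subtype_mk _
  exact congrArg Subtype.val (PreconnectedSpace.constant inferInstance hd)

theorem div_mem_slitPlane_of_re_mul_nonneg {z w v : ℂ} (hz : z ≠ 0) (hzv : 0 ≤ (z * v).re)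
    (hwv : 0 < (w * v).re) : z / w ∈ slitPlane := by
  have hw : w ≠ 0 := by rintro rfl; simp at hwv
  rw [mem_slitPlane_iff_not_le_zero]
  intro hle
  obtain ⟨r, hr, hzr⟩ : ∃ r : ℝ, r ≤ 0 ∧ z / w = r :=
    ⟨(z / w).re, (le_def.1 hle).1, ext rfl (by simpa using (le_def.1 hle).2)⟩
  rw [div_eq_iff hw] at hzr
  have hre : (z * v).re = r * (w * v).re := by rw [hzr, mul_assoc, re_ofReal_mul]
  have hr0 : r = 0 := by nlinarith
  exact hz (by simp [hzr, hr0])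

/-- If the quotients all lay in the slit plane, `L u - 2πi (u - a)` and the principal logarithm of
its exponential would be two continuous logarithms of one map, hence differ by a constant; but only
the first one drops by `2πi` around the loop. -/
theorem exists_exp_div_exp_two_pi_mul_I_notMem_slitPlane {L : unitInterval → ℂ}
    (hL : Continuous L) (hloop : L 0 = L 1) (a : ℂ) :
    ∃ u : unitInterval, exp (L u) / exp (2 * π * I * (u - a)) ∉ slitPlane := by
  by_contra! h
  set M : unitInterval → ℂ := fun u ↦ L u - 2 * π * I * (u - a)
  have hM : Continuous M := by fun_prop
  have hlog : Continuous fun u ↦ log (exp (M u)) :=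
    hM.cexp.clog fun u ↦ (exp_sub _ _).symm ▸ h u
  have hM1 : M 1 = M 0 - 2 * π * I := by simp [M, hloop]; ring
  have key := sub_eq_sub_of_exp_eq hM hlog (fun u ↦ (exp_log (exp_ne_zero _)).symm) 0 1
  rw [hM1, exp_sub (M 0), exp_two_pi_mul_I, div_one] at key
  exact two_pi_I_ne_zero (by linear_combination key)

theorem re_exp_mul_neg_I_pow_pos {u : ℝ} (k : ℕ) (hu : u ∈ Icc (k / 4 : ℝ) ((k + 1) / 4)) :
    0 < (exp (2 * π * I * (u - 1 / 8)) * (-I) ^ k).re := by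
  have hrot : exp (2 * π * I * (u - 1 / 8)) * (-I) ^ k
      = exp (↑(2 * π * (u - (2 * k + 1) / 8)) * I) := by
    rw [← exp_neg_pi_div_two_mul_I, ← exp_nat_mul, ← exp_add]
    push_cast
    ring_nf
  rw [hrot, exp_ofReal_mul_I_re]
  apply cos_pos_of_mem_Ioo
  obtain ⟨h₁, h₂⟩ := hu
  constructor <;> nlinarith [pi_pos]

end Complex

open Complex

instance : ContractibleSpace unitInterval :=
  (convex_Icc (0 : ℝ) 1).contractibleSpace ⟨0, unitInterval.zero_mem⟩

instance : LocallyPathConnectedSpace unitInterval :=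
  (convex_Icc (0 : ℝ) 1).locallyPathConnectedSpace

/-- Runs through the sides `t = 1`, `s = 0`, `t = 0`, `s = 1` of the square of pairs `(t, s)`,
one side per quarter of `[0, 1]`, starting and ending at `(1, 1)`. -/
noncomputable def squareBoundary (u : unitInterval) : unitInterval × unitInterval :=
  (projIcc 0 1 zero_le_one (|4 * (u : ℝ) - 5 / 2| - 1 / 2),
    projIcc 0 1 zero_le_one (|4 * (u : ℝ) - 3 / 2| - 1 / 2))

theorem continuous_squareBoundary : Continuous squareBoundary := by
  unfold squareBoundary; fun_prop

theorem squareBoundary_zero : squareBoundary 0 = squareBoundary 1 := by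
  simp only [squareBoundary, Icc.coe_zero, Icc.coe_one]
  norm_num [eq_comm (a := (1 : unitInterval)), projIcc_eq_one]

theorem squareBoundary_fst_eq_one {u : unitInterval} (hu : (u : ℝ) ≤ 1 / 4) :
    (squareBoundary u).1 = 1 := by
  rw [squareBoundary, projIcc_eq_one, abs_of_neg (by linarith)]; linarith

theorem squareBoundary_snd_eq_zero {u : unitInterval} (hu : (u : ℝ) ∈ Icc (1 / 4) (1 / 2)) :
    (squareBoundary u).2 = 0 := by
  rw [squareBoundary, projIcc_eq_zero, sub_nonpos, abs_le]; constructor <;> linarith [hu.1, hu.2]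

theorem squareBoundary_fst_eq_zero {u : unitInterval} (hu : (u : ℝ) ∈ Icc (1 / 2) (3 / 4)) :
    (squareBoundary u).1 = 0 := by
  rw [squareBoundary, projIcc_eq_zero, sub_nonpos, abs_le]; constructor <;> linarith [hu.1, hu.2]

theorem squareBoundary_snd_eq_one {u : unitInterval} (hu : 3 / 4 ≤ (u : ℝ)) :
    (squareBoundary u).2 = 1 := by
  rw [squareBoundary, projIcc_eq_one, abs_of_pos (by linarith)]; linarith

section Crossing

variable {γ₁ γ₂ : unitInterval → ℂ}

theorem exists_quarter_re_mul_neg_I_pow_nonneg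
    (hre : ∀ s, (γ₂ s).re ∈ Icc (γ₁ 0).re (γ₁ 1).re)
    (him : ∀ t, (γ₁ t).im ∈ Icc (γ₂ 0).im (γ₂ 1).im) (u : unitInterval) :
    ∃ k : ℕ, (u : ℝ) ∈ Icc (k / 4 : ℝ) ((k + 1) / 4) ∧
      0 ≤ ((γ₁ (squareBoundary u).1 - γ₂ (squareBoundary u).2) * (-I) ^ k).re := by
  obtain ⟨hu₀, hu₁⟩ := u.2
  rcases le_total (u : ℝ) (1 / 4) with h₁ | h₁
  · refine ⟨0, by norm_num [h₁, hu₀], ?_⟩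
    simpa [squareBoundary_fst_eq_one h₁] using (hre _).2
  rcases le_total (u : ℝ) (1 / 2) with h₂ | h₂
  · refine ⟨1, by norm_num [h₁, h₂], ?_⟩
    simpa [squareBoundary_snd_eq_zero ⟨h₁, h₂⟩] using (him _).1
  rcases le_total (u : ℝ) (3 / 4) with h₃ | h₃
  · refine ⟨2, by norm_num [h₂, h₃], ?_⟩
    simpa [squareBoundary_fst_eq_zero ⟨h₂, h₃⟩, pow_two] using (hre _).1
  · refine ⟨3, by norm_num [h₃, hu₁], ?_⟩
    simpa [squareBoundary_snd_eq_one h₃, pow_three] using (him _).2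

theorem exists_apply_eq_apply_of_re_im_mem_Icc (h₁ : Continuous γ₁) (h₂ : Continuous γ₂)
    (hre : ∀ s, (γ₂ s).re ∈ Icc (γ₁ 0).re (γ₁ 1).re)
    (him : ∀ t, (γ₁ t).im ∈ Icc (γ₂ 0).im (γ₂ 1).im) :
    ∃ t s, γ₁ t = γ₂ s := by
  by_contra! hne
  have hD₀ (p : unitInterval × unitInterval) : γ₁ p.1 - γ₂ p.2 ≠ 0 := sub_ne_zero.2 (hne _ _)
  obtain ⟨Λ, hΛ, hexp⟩ := exists_continuous_exp_eq (by fun_prop) hD₀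
  obtain ⟨u, hu⟩ := exists_exp_div_exp_two_pi_mul_I_notMem_slitPlane
    (hΛ.comp continuous_squareBoundary) (congrArg Λ squareBoundary_zero) (1 / 8)
  obtain ⟨k, hk, hD⟩ := exists_quarter_re_mul_neg_I_pow_nonneg hre him u
  rw [Function.comp_apply, hexp] at hu
  exact hu (div_mem_slitPlane_of_re_mul_nonneg (hD₀ _) hD (re_exp_mul_neg_I_pow_pos k hk))

end Crossing

theorem stmt13_general (γ₁ γ₂ : unitInterval → (Fin 2 → ℝ))
    (hc₁ : Continuous γ₁) (hc₂ : Continuous γ₂)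
    (hr₁ : Set.range γ₁ ⊆ unitCube 2) (hr₂ : Set.range γ₂ ⊆ unitCube 2)
    (h₁0 : γ₁ 0 ∈ face 2 0 0) (h₁1 : γ₁ 1 ∈ face 2 0 1)
    (h₂0 : γ₂ 0 ∈ face 2 1 0) (h₂1 : γ₂ 1 ∈ face 2 1 1) :
    (Set.range γ₁ ∩ Set.range γ₂).Nonempty := by
  let φ : (Fin 2 → ℝ) ≃ₜ ℂ := Homeomorph.finTwoArrow.trans equivRealProdCLM.toHomeomorph.symm
  obtain ⟨t, s, hts⟩ := exists_apply_eq_apply_of_re_im_mem_Icc (γ₁ := φ ∘ γ₁) (γ₂ := φ ∘ γ₂)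
    (by fun_prop) (by fun_prop)
    (fun s ↦ by simpa [φ, h₁0.2, h₁1.2] using ⟨(hr₂ ⟨s, rfl⟩).1 0, (hr₂ ⟨s, rfl⟩).2 0⟩)
    (fun t ↦ by simpa [φ, h₂0.2, h₂1.2] using ⟨(hr₁ ⟨t, rfl⟩).1 1, (hr₁ ⟨t, rfl⟩).2 1⟩)
  exact ⟨γ₁ t, ⟨t, rfl⟩, s, φ.injective hts.symm⟩

theorem stmt13 (γ₁ γ₂ : unitInterval → (Fin 2 → ℝ))
    (hc₁ : Continuous γ₁) (hc₂ : Continuous γ₂)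
    (hi₁ : Function.Injective γ₁) (hi₂ : Function.Injective γ₂)
    (hr₁ : Set.range γ₁ ⊆ unitCube 2) (hr₂ : Set.range γ₂ ⊆ unitCube 2)
    (h₁0 : γ₁ 0 ∈ face 2 0 0) (h₁1 : γ₁ 1 ∈ face 2 0 1)
    (h₂0 : γ₂ 0 ∈ face 2 1 0) (h₂1 : γ₂ 1 ∈ face 2 1 1) :
    (Set.range γ₁ ∩ Set.range γ₂).Nonempty :=
  stmt13_general γ₁ γ₂ hc₁ hc₂ hr₁ hr₂ h₁0 h₁1 h₂0 h₂1
end
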